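/- arXiv:1009.3188 — 7 statements merged into one kernel-verified Lean document; each statement's English description precedes it below -/
import Mathlib

section
/- A compact convex set P in R^N is a polytope if and only if for every point x in P there exists a real number δ > 0 such that for every y in R^N with 0 < ‖x − y‖ < δ, if the open segment (x, y) meets P, then y belongs to P. -/
/-!
If `P = conv s` and `x ∈ P`, small vectors of the cone spanned by the `p - x`, `p ∈ s`, are
subconvex combinations of them, so the points `y` near `x` seen from `x` through `P` lie in
`conv (insert x s) = P`. For the cone statement, either `0 ∉ conv (s - x)`, and then the
coefficients of a combination are bounded by a multiple of its norm, or there is a positive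
dependence among the generators that eliminates one of them, and one inducts on `s`.

Conversely, the extension property at `z ∈ P` forbids extreme points `e ≠ z` close to `z`, since
`e` would be the midpoint of `z` and `2e - z ∈ P`. Hence the extreme points of the compact set `P`
are finite, and `P` is their convex hull by Krein–Milman.
-/

open Set

/-- A polytope in `ℝ^N`: the convex hull of finitely many points. -/
def IsPolytope {N : ℕ} (P : Set (Fin N → ℝ)) : Prop :=
  ∃ s : Finset (Fin N → ℝ), P = convexHull ℝ (s : Set (Fin N → ℝ))

open Finset Filter Topology

section ConeNearApex

variable {ι R E : Type*} [AddCommGroup E]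

lemma Finset.sum_smul_centerMass [Field R] [Module R E] {s : Finset ι} {w : ι → R} (z : ι → E)
    (hw : ∑ i ∈ s, w i ≠ 0) : (∑ i ∈ s, w i) • s.centerMass w z = ∑ i ∈ s, w i • z i := by
  rw [Finset.centerMass, smul_smul, mul_inv_cancel₀ hw, one_smul]

lemma exists_sum_smul_eq_of_mem_convexHull_image [Field R] [LinearOrder R] [IsStrictOrderedRing R]
    [Module R E] {s : Finset ι} {φ : ι → E} {v : E} (hv : v ∈ convexHull R (φ '' s)) :
    ∃ w : ι → R, (∀ i ∈ s, 0 ≤ w i) ∧ ∑ i ∈ s, w i = 1 ∧ ∑ i ∈ s, w i • φ i = v := by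
  classical
  have hsub : convexHull R (φ '' s) ⊆ {v | ∃ w : ι → R, (∀ i ∈ s, 0 ≤ w i) ∧
      ∑ i ∈ s, w i = 1 ∧ ∑ i ∈ s, w i • φ i = v} := by
    refine convexHull_min ?_ ?_
    · rintro _ ⟨i, hi : i ∈ s, rfl⟩
      exact ⟨fun j => if j = i then 1 else 0, fun j _ => by positivity, by simp [hi], by simp [hi]⟩
    · rintro _ ⟨w, hw0, hw1, rfl⟩ _ ⟨w', hw0', hw1', rfl⟩ a b ha hb hab
      refine ⟨a • w + b • w', fun i hi => ?_, ?_, ?_⟩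
      · have := hw0 i hi
        have := hw0' i hi
        simp only [Pi.add_apply, Pi.smul_apply, smul_eq_mul]
        positivity
      · simp [sum_add_distrib, ← mul_sum, hw1, hw1', hab]
      · simp [add_smul, mul_smul, sum_add_distrib, ← smul_sum]
  exact hsub hv

variable [Module ℝ E] {s : Finset ι} {φ : ι → E} {t : ι → ℝ}

lemma sum_smul_mem_convexHull_insert_zero (ht0 : ∀ i ∈ s, 0 ≤ t i) (ht1 : ∑ i ∈ s, t i ≤ 1) :
    ∑ i ∈ s, t i • φ i ∈ convexHull ℝ (insert 0 (φ '' s)) := by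
  rcases (sum_nonneg ht0).eq_or_lt with hT | hT
  · have ht : ∀ i ∈ s, t i = 0 := (sum_eq_zero_iff_of_nonneg ht0).1 hT.symm
    rw [sum_eq_zero fun i hi => by rw [ht i hi, zero_smul]]
    exact subset_convexHull ℝ _ (mem_insert _ _)
  have hstar : StarConvex ℝ 0 (convexHull ℝ (insert 0 (φ '' s))) :=
    (convex_convexHull ℝ _).starConvex (subset_convexHull ℝ _ (mem_insert _ _))
  rw [← s.sum_smul_centerMass φ hT.ne']
  exact hstar.smul_mem (convexHull_mono (subset_insert _ _)
    (s.centerMass_mem_convexHull ht0 hT fun i hi => mem_image_of_mem φ hi)) hT.le ht1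

lemma exists_erase_sum_smul_eq [DecidableEq ι] (h0 : (0 : E) ∈ convexHull ℝ (φ '' s))
    (ht : ∀ i ∈ s, 0 ≤ t i) :
    ∃ j ∈ s, ∃ t' : ι → ℝ, (∀ i ∈ s.erase j, 0 ≤ t' i) ∧
      ∑ i ∈ s.erase j, t' i • φ i = ∑ i ∈ s, t i • φ i := by
  obtain ⟨w, hw0, hw1, hwφ⟩ := exists_sum_smul_eq_of_mem_convexHull_image h0
  set S := s.filter (fun i => 0 < w i)
  have hS : S.Nonempty := by
    obtain ⟨i, hi, hwi⟩ := exists_lt_of_sum_lt (s := s) (f := 0) (g := w) (by simp [hw1])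
    exact ⟨i, mem_filter.2 ⟨hi, hwi⟩⟩
  obtain ⟨j, hjS, hjmin⟩ := S.exists_min_image (fun i => t i / w i) hS
  obtain ⟨hj, hwj⟩ := mem_filter.1 hjS
  -- subtract the largest multiple of the dependence `w` that keeps `t` nonnegative
  set c := t j / w j
  refine ⟨j, hj, fun i => t i - c * w i, fun i hi => ?_, ?_⟩
  · have hi := mem_of_mem_erase hi
    by_cases hwi : 0 < w i
    · linarith [(le_div_iff₀ hwi).1 (hjmin i (mem_filter.2 ⟨hi, hwi⟩))]
    · simp [le_antisymm (not_lt.1 hwi) (hw0 i hi), ht i hi]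
  · rw [sum_erase _ (by simp [c, hwj.ne'])]
    simp only [sub_smul, sum_sub_distrib, mul_smul, ← smul_sum, hwφ, smul_zero, sub_zero]

end ConeNearApex

section ConeNearApexNormed

variable {ι E : Type*} [NormedAddCommGroup E] [NormedSpace ℝ E]

lemma exists_pos_mul_sum_le_norm_sum_smul {s : Finset ι} {φ : ι → E}
    (h0 : (0 : E) ∉ convexHull ℝ (φ '' s)) :
    ∃ m > 0, ∀ t : ι → ℝ, (∀ i ∈ s, 0 ≤ t i) → m * ∑ i ∈ s, t i ≤ ‖∑ i ∈ s, t i • φ i‖ := by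
  have hK : IsClosed (convexHull ℝ (φ '' s)) :=
    (s.finite_toSet.image φ).isClosed_convexHull (𝕜 := ℝ)
  obtain ⟨m, hm, hball⟩ := Metric.mem_nhds_iff.1 (hK.isOpen_compl.mem_nhds h0)
  refine ⟨m, hm, fun t ht => ?_⟩
  rcases (sum_nonneg ht).eq_or_lt with hT | hT
  · rw [← hT, mul_zero]
    exact norm_nonneg _
  have hc : s.centerMass t φ ∈ convexHull ℝ (φ '' s) :=
    s.centerMass_mem_convexHull ht hT fun i hi => mem_image_of_mem φ hi
  have hmc : m ≤ ‖s.centerMass t φ‖ := not_lt.1 fun h => hball (mem_ball_zero_iff.2 h) hc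
  calc m * ∑ i ∈ s, t i ≤ (∑ i ∈ s, t i) * ‖s.centerMass t φ‖ := by
        rw [mul_comm]
        gcongr
    _ = ‖∑ i ∈ s, t i • φ i‖ := by
        rw [← s.sum_smul_centerMass φ hT.ne', norm_smul, Real.norm_of_nonneg hT.le]

theorem exists_pos_sum_smul_mem_convexHull_insert_zero (s : Finset ι) (φ : ι → E) :
    ∃ δ > 0, ∀ t : ι → ℝ, (∀ i ∈ s, 0 ≤ t i) → ‖∑ i ∈ s, t i • φ i‖ < δ →
      ∑ i ∈ s, t i • φ i ∈ convexHull ℝ (insert 0 (φ '' s)) := by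
  classical
  induction s using Finset.strongInduction with
  | H s ih =>
  by_cases h0 : (0 : E) ∈ convexHull ℝ (φ '' s)
  · have hs : s.Nonempty := by
      rw [Finset.nonempty_iff_ne_empty]
      rintro rfl
      simp at h0
    choose! δ hδ hδmem using fun j (hj : j ∈ s) => ih (s.erase j) (erase_ssubset hj)
    refine ⟨s.inf' hs δ, (lt_inf'_iff hs).2 hδ, fun t ht hnorm => ?_⟩
    obtain ⟨j, hj, t', ht', heq⟩ := exists_erase_sum_smul_eq h0 ht
    rw [← heq] at hnorm ⊢
    exact convexHull_mono (Set.insert_subset_insert (Set.image_mono (s.erase_subset j)))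
      (hδmem j hj t' ht' (hnorm.trans_le (inf'_le δ hj)))
  · obtain ⟨m, hm, hmle⟩ := exists_pos_mul_sum_le_norm_sum_smul h0
    refine ⟨m, hm, fun t ht hnorm => sum_smul_mem_convexHull_insert_zero ht ?_⟩
    exact ((mul_lt_iff_lt_one_right hm).1 ((hmle t ht).trans_lt hnorm)).le

end ConeNearApexNormed

section LocalSegmentExtension

variable {E : Type*} [NormedAddCommGroup E] [NormedSpace ℝ E]

def HasLocalSegmentExtension (P : Set E) (x : E) : Prop :=
  ∃ δ : ℝ, 0 < δ ∧ ∀ y : E, 0 < ‖x - y‖ → ‖x - y‖ < δ →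
    (openSegment ℝ x y ∩ P).Nonempty → y ∈ P

theorem hasLocalSegmentExtension_convexHull (s : Finset E) {x : E}
    (hx : x ∈ convexHull ℝ (s : Set E)) :
    HasLocalSegmentExtension (convexHull ℝ (s : Set E)) x := by
  obtain ⟨δ, hδ, hmem⟩ := exists_pos_sum_smul_mem_convexHull_insert_zero s (· - x)
  refine ⟨δ, hδ, fun y _ hyδ ⟨z, ⟨a, b, ha, hb, hab, hz⟩, hzP⟩ => ?_⟩
  obtain ⟨w, hw0, hw1, hwz⟩ := Finset.mem_convexHull'.1 hzP
  have hyx : ∑ p ∈ s, (b⁻¹ * w p) • (p - x) = y - x := by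
    calc _ = b⁻¹ • (∑ p ∈ s, w p • p - (∑ p ∈ s, w p) • x) := by
          simp only [smul_sub, sum_sub_distrib, sum_smul, smul_sum, mul_smul]
      _ = y - x := by
          obtain rfl : a = 1 - b := by linarith
          rw [hwz, hw1, one_smul, ← hz, show (1 - b) • x + b • y - x = b • (y - x) by module,
            smul_smul, inv_mul_cancel₀ hb.ne', one_smul]
  have hcone : convexHull ℝ (insert 0 ((· - x) '' s)) ⊆ (x + ·) ⁻¹' convexHull ℝ s := by
    refine convexHull_min (Set.insert_subset (by simpa) ?_)
      ((convex_convexHull ℝ _).translate_preimage_right x)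
    rintro _ ⟨p, hp, rfl⟩
    simpa using subset_convexHull ℝ _ hp
  have hy := hcone (hmem (fun p => b⁻¹ * w p) (fun p hp => by have := hw0 p hp; positivity)
    (by rwa [hyx, norm_sub_rev]))
  rw [hyx] at hy
  simpa using hy

lemma HasLocalSegmentExtension.eventually_eq_of_mem_extremePoints {P : Set E} {z : E}
    (h : HasLocalSegmentExtension P z) (hz : z ∈ P) :
    ∀ᶠ e in 𝓝 z, e ∈ P.extremePoints ℝ → e = z := by
  obtain ⟨δ, hδ, hext⟩ := h
  filter_upwards [Metric.ball_mem_nhds z (half_pos hδ)] with e he heP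
  by_contra hne
  have hmid : e ∈ openSegment ℝ z ((2 : ℝ) • e - z) :=
    ⟨1 / 2, 1 / 2, by norm_num, by norm_num, by norm_num, by module⟩
  have hnorm : ‖z - ((2 : ℝ) • e - z)‖ = 2 * dist e z := by
    rw [show z - ((2 : ℝ) • e - z) = (2 : ℝ) • (z - e) by module, norm_smul, Real.norm_two,
      dist_eq_norm, norm_sub_rev]
  have hy : (2 : ℝ) • e - z ∈ P := by
    refine hext _ ?_ ?_ ⟨e, hmid, heP.1⟩
    · rw [hnorm]
      have := dist_pos.2 hne
      positivity
    · rw [hnorm]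
      linarith [Metric.mem_ball.1 he]
  exact hne (heP.2 hz hy hmid).symm

end LocalSegmentExtension

lemma IsCompact.finite_of_forall_eventually_eq {X : Type*} [TopologicalSpace X] {K A : Set X}
    (hK : IsCompact K) (hAK : A ⊆ K) (h : ∀ z ∈ K, ∀ᶠ y in 𝓝 z, y ∈ A → y = z) : A.Finite := by
  by_contra hA
  obtain ⟨z, hz, hacc⟩ := Set.Infinite.exists_accPt_of_subset_isCompact hA hK hAK
  obtain ⟨y, ⟨hyz, hyA⟩, hy⟩ := ((accPt_iff_frequently.1 hacc).and_eventually (h z hz)).exists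
  exact hyz (hy hyA)

lemma isPolytope_of_finite_extremePoints {N : ℕ} {P : Set (Fin N → ℝ)} (hPc : IsCompact P)
    (hPconv : Convex ℝ P) (hfin : (P.extremePoints ℝ).Finite) : IsPolytope P :=
  ⟨hfin.toFinset, by rw [hfin.coe_toFinset, ← (hfin.isClosed_convexHull (𝕜 := ℝ)).closure_eq,
    closure_convexHull_extremePoints hPc hPconv]⟩

/-- A compact convex set `P ⊆ ℝ^N` is a polytope iff for every `x ∈ P` there is `δ > 0`
such that for every `y` with `0 < ‖x - y‖ < δ`, if the open segment `(x, y)` meets `P`,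
then `y ∈ P`. -/
theorem polytope_iff_local_extension {N : ℕ} (P : Set (Fin N → ℝ))
    (hPc : IsCompact P) (hPconv : Convex ℝ P) :
    IsPolytope P ↔
      ∀ x ∈ P, ∃ δ : ℝ, 0 < δ ∧ ∀ y : Fin N → ℝ,
        0 < ‖x - y‖ → ‖x - y‖ < δ →
        (openSegment ℝ x y ∩ P).Nonempty → y ∈ P := by
  refine ⟨?_, fun h => isPolytope_of_finite_extremePoints hPc hPconv ?_⟩
  · rintro ⟨s, rfl⟩ x hx
    exact hasLocalSegmentExtension_convexHull s hx
  · exact hPc.finite_of_forall_eventually_eq extremePoints_subset fun z hz =>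
      HasLocalSegmentExtension.eventually_eq_of_mem_extremePoints (h z hz) hz
end

section
/- Let P ⊆ R^N be a polytope not containing the origin and D = R_+ · P. Let Σ ∈ D \ {0}, let Σ_m be a sequence of distinct points of R^N converging to Σ, let S ∈ R^N \ {0}, let c_m ≥ 0 be a bounded sequence of reals, and set Γ_m = Σ_m − c_m S. Assume the open segment (Σ, Γ_m) meets D for every m. Then for infinitely many m there exists a point P_m in the closed segment [Σ_m, Γ_m] lying in D. -/
/-!
`D` is the cone generated by `s`. By Carathéodory, every point of a finitely generated cone is a
nonnegative combination of linearly independent generators, with total weight at most a constant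
times its norm; hence near `Sig` the cone `D` coincides with `Sig + T`, where `T` is the cone
generated by `s` and `-Sig`. The hypothesis gives `Γ m - Sig ∈ T`. Take the least `u m ∈ [0, c m]`
with `Sm m - Sig - u m • S ∈ T`. Since `T` is closed and has the same local description at every
one of its points, a positive limit of a subsequence of `u m` could be lowered, so `u m → 0`.
Then `Sm m - u m • S ∈ [Sm m, Γ m]` lies in `Sig + T` close to `Sig`, hence in `D`, for all
large `m`.
-/

open Set Filter Topology

namespace PointedCone

section Algebra

variable {E : Type*} [AddCommGroup E] [Module ℝ E]

lemma mem_hull_finset_iff {G : Finset E} {x : E} :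
    x ∈ hull ℝ (G : Set E) ↔ ∃ β : E → ℝ, (∀ v ∈ G, 0 ≤ β v) ∧ ∑ v ∈ G, β v • v = x := by
  constructor
  · intro hx
    obtain ⟨f, -, rfl⟩ := Submodule.mem_span_finset.1 hx
    exact ⟨fun v => f v, fun v _ => (f v).2, rfl⟩
  · rintro ⟨β, hβ, rfl⟩
    exact Submodule.sum_mem _ fun v hv => smul_mem _ (hβ v hv) (subset_hull hv)

lemma mem_hull_finset_iff_exists_smul_mem_convexHull {G : Finset E} (hG : G.Nonempty) {x : E} :
    x ∈ hull ℝ (G : Set E) ↔ ∃ t : ℝ, 0 ≤ t ∧ ∃ p ∈ convexHull ℝ (G : Set E), x = t • p := by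
  constructor
  · intro hx
    obtain ⟨β, hβ, rfl⟩ := mem_hull_finset_iff.1 hx
    rcases (Finset.sum_nonneg hβ).eq_or_lt with ht | ht
    · obtain ⟨v, hv⟩ := hG
      refine ⟨0, le_rfl, v, subset_convexHull ℝ _ hv, ?_⟩
      rw [zero_smul]
      exact Finset.sum_eq_zero fun w hw => by
        rw [(Finset.sum_eq_zero_iff_of_nonneg hβ).1 ht.symm w hw, zero_smul]
    · refine ⟨_, ht.le, G.centerMass β id, G.centerMass_mem_convexHull hβ ht fun v hv => hv, ?_⟩
      rw [Finset.centerMass, smul_inv_smul₀ ht.ne']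
      rfl
  · rintro ⟨t, ht, p, hp, rfl⟩
    exact smul_mem _ ht (convexHull_min subset_hull (hull ℝ (G : Set E)).convex hp)

lemma exists_mem_hull_erase_of_relation [DecidableEq E] {G : Finset E} {β g : E → ℝ}
    (hβ : ∀ v ∈ G, 0 ≤ β v) (hg : ∑ v ∈ G, g v • v = 0) (hpos : ∃ v ∈ G, 0 < g v) :
    ∃ v ∈ G, ∑ v ∈ G, β v • v ∈ hull ℝ (G.erase v : Set E) := by
  obtain ⟨v, hv, hmin⟩ : ∃ v ∈ G.filter (0 < g ·), ∀ w ∈ G.filter (0 < g ·),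
      β v / g v ≤ β w / g w := by
    obtain ⟨w, hwG, hw⟩ := hpos
    exact Finset.exists_min_image _ _ ⟨w, Finset.mem_filter.2 ⟨hwG, hw⟩⟩
  obtain ⟨hvG, hgv⟩ := Finset.mem_filter.1 hv
  set r := β v / g v
  have hr : 0 ≤ r := div_nonneg (hβ v hvG) hgv.le
  -- `r` is the largest multiple of the relation `g` that can be subtracted from `β`
  have hnonneg : ∀ w ∈ G, 0 ≤ β w - r * g w := by
    intro w hw
    rcases le_or_gt (g w) 0 with hgw | hgw
    · nlinarith [hβ w hw]
    · have := hmin w (Finset.mem_filter.2 ⟨hw, hgw⟩)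
      rw [le_div_iff₀ hgw] at this
      linarith
  have hzero : β v - r * g v = 0 := by
    rw [div_mul_cancel₀ _ hgv.ne', sub_self]
  refine ⟨v, hvG, mem_hull_finset_iff.2 ⟨fun w => β w - r * g w,
    fun w hw => hnonneg w (Finset.mem_of_mem_erase hw), ?_⟩⟩
  rw [Finset.sum_erase _ (by simp only [hzero, zero_smul])]
  simp only [sub_smul, mul_smul, Finset.sum_sub_distrib, ← Finset.smul_sum, hg, smul_zero,
    sub_zero]

lemma exists_mem_hull_erase_of_not_linearIndepOn [DecidableEq E] {G : Finset E}
    (hG : ¬LinearIndepOn ℝ id (G : Set E)) {x : E} (hx : x ∈ hull ℝ (G : Set E)) :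
    ∃ v ∈ G, x ∈ hull ℝ (G.erase v : Set E) := by
  obtain ⟨β, hβ, rfl⟩ := mem_hull_finset_iff.1 hx
  obtain ⟨g, hg, w, hwG, hgw⟩ := not_linearIndepOn_finset_iff.1 hG
  rcases hgw.lt_or_gt with hneg | hpos
  · refine exists_mem_hull_erase_of_relation (g := -g) hβ ?_ ⟨w, hwG, neg_pos.2 hneg⟩
    simpa [neg_smul, Finset.sum_neg_distrib] using hg
  · exact exists_mem_hull_erase_of_relation hβ hg ⟨w, hwG, hpos⟩

lemma exists_linearIndepOn_subset_of_mem_hull {G : Finset E} {x : E}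
    (hx : x ∈ hull ℝ (G : Set E)) :
    ∃ B ⊆ G, LinearIndepOn ℝ id (B : Set E) ∧ x ∈ hull ℝ (B : Set E) := by
  classical
  induction G using Finset.strongInduction with
  | H G ih =>
    by_cases hG : LinearIndepOn ℝ id (G : Set E)
    · exact ⟨G, subset_rfl, hG, hx⟩
    obtain ⟨v, hv, hxv⟩ := exists_mem_hull_erase_of_not_linearIndepOn hG hx
    obtain ⟨B, hB, hBind, hxB⟩ := ih _ (Finset.erase_ssubset hv) hxv
    exact ⟨B, hB.trans (Finset.erase_subset _ _), hBind, hxB⟩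

lemma zero_notMem_convexHull_of_linearIndepOn {B : Finset E}
    (hB : LinearIndepOn ℝ id (B : Set E)) : (0 : E) ∉ convexHull ℝ (B : Set E) := by
  intro h0
  obtain ⟨w, -, hw1, hw0⟩ := Finset.mem_convexHull'.1 h0
  have hw : ∀ v ∈ B, w v = 0 := linearIndepOn_finset_iff.1 hB w hw0
  rw [Finset.sum_eq_zero hw] at hw1
  exact zero_ne_one hw1

lemma sub_mem_hull_insert_neg [DecidableEq E] {G : Finset E} {x y : E}
    (hx : x ∈ hull ℝ (G : Set E)) : x - y ∈ hull ℝ (↑(insert (-y) G) : Set E) :=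
  sub_eq_add_neg x y ▸ add_mem
    (Submodule.span_mono (Finset.coe_subset.2 (Finset.subset_insert _ _)) hx)
    (subset_hull (Finset.mem_coe.2 (Finset.mem_insert_self _ _)))

end Algebra

section Topology

variable {E : Type*} [NormedAddCommGroup E] [NormedSpace ℝ E]

lemma _root_.IsCompact.isClosed_setOf_nonneg_smul {K : Set E} (hK : IsCompact K)
    (h0 : (0 : E) ∉ K) : IsClosed {x | ∃ t : ℝ, 0 ≤ t ∧ ∃ p ∈ K, x = t • p} := by
  have hnorm : ∀ p ∈ K, ‖p‖ ≠ 0 := fun p hp h => h0 (norm_eq_zero.1 h ▸ hp)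
  refine IsSeqClosed.isClosed fun x y hx hxy => ?_
  choose t ht p hpK hxtp using hx
  obtain ⟨q, hqK, φ, hφ, hpq⟩ := hK.tendsto_subseq hpK
  have ht_eq : ∀ n, t n = ‖x n‖ / ‖p n‖ := fun n => by
    rw [hxtp n, norm_smul, Real.norm_of_nonneg (ht n), mul_div_cancel_right₀ _ (hnorm _ (hpK n))]
  have hxy' := hxy.comp hφ.tendsto_atTop
  have ht_lim : Tendsto (fun k => t (φ k)) atTop (𝓝 (‖y‖ / ‖q‖)) := by
    simp only [ht_eq]
    exact hxy'.norm.div hpq.norm (hnorm q hqK)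
  refine ⟨‖y‖ / ‖q‖, by positivity, q, hqK, tendsto_nhds_unique hxy' ?_⟩
  simpa only [Function.comp_def, hxtp] using ht_lim.smul hpq

lemma isClosed_hull_finset (G : Finset E) : IsClosed (hull ℝ (G : Set E) : Set E) := by
  classical
  have hcarath : (hull ℝ (G : Set E) : Set E) =
      ⋃ B ∈ G.powerset.filter (fun B : Finset E => LinearIndepOn ℝ id (B : Set E)),
        (hull ℝ (B : Set E) : Set E) := by
    ext x
    simp only [mem_iUnion, Finset.mem_filter, Finset.mem_powerset, SetLike.mem_coe, exists_prop]
    refine ⟨fun hx => ?_, fun ⟨B, ⟨hBG, _⟩, hxB⟩ => Submodule.span_mono hBG hxB⟩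
    obtain ⟨B, hBG, hB, hxB⟩ := exists_linearIndepOn_subset_of_mem_hull hx
    exact ⟨B, ⟨hBG, hB⟩, hxB⟩
  rw [hcarath]
  refine isClosed_biUnion_finset fun B hB => ?_
  rcases B.eq_empty_or_nonempty with rfl | hBne
  · simp
  have hB := (Finset.mem_filter.1 hB).2
  convert (B.finite_toSet.isCompact_convexHull ℝ).isClosed_setOf_nonneg_smul
    (zero_notMem_convexHull_of_linearIndepOn hB) using 1
  ext x
  exact mem_hull_finset_iff_exists_smul_mem_convexHull hBne

lemma exists_pos_mul_sum_le_norm_of_zero_notMem {B : Finset E}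
    (hB : (0 : E) ∉ convexHull ℝ (B : Set E)) :
    ∃ δ > 0, ∀ x ∈ hull ℝ (B : Set E), ∃ β : E → ℝ, (∀ v ∈ B, 0 ≤ β v) ∧
      ∑ v ∈ B, β v • v = x ∧ δ * ∑ v ∈ B, β v ≤ ‖x‖ := by
  obtain ⟨δ, hδ, hball⟩ :=
    Metric.isOpen_iff.1 (B.finite_toSet.isClosed_convexHull ℝ).isOpen_compl 0 hB
  refine ⟨δ, hδ, fun x hx => ?_⟩
  obtain ⟨β, hβ, rfl⟩ := mem_hull_finset_iff.1 hx
  refine ⟨β, hβ, rfl, ?_⟩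
  rcases (Finset.sum_nonneg hβ).eq_or_lt with ht | ht
  · rw [← ht, mul_zero]
    exact norm_nonneg _
  have hp : δ ≤ ‖B.centerMass β id‖ := not_lt.1 fun h =>
    hball (mem_ball_zero_iff.2 h) (B.centerMass_mem_convexHull hβ ht fun v hv => hv)
  calc δ * ∑ v ∈ B, β v ≤ ‖B.centerMass β id‖ * ∑ v ∈ B, β v := by gcongr
    _ = ‖∑ v ∈ B, β v • v‖ := by
      rw [Finset.centerMass, norm_smul, norm_inv, Real.norm_of_nonneg ht.le,
        mul_right_comm, inv_mul_cancel₀ ht.ne', one_mul]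
      rfl

lemma exists_pos_mul_sum_le_norm (G : Finset E) :
    ∃ δ > 0, ∀ x ∈ hull ℝ (G : Set E), ∃ β : E → ℝ, (∀ v ∈ G, 0 ≤ β v) ∧
      ∑ v ∈ G, β v • v = x ∧ δ * ∑ v ∈ G, β v ≤ ‖x‖ := by
  classical
  have hδB : ∀ B : Finset E, ∃ δ > 0, (0 : E) ∉ convexHull ℝ (B : Set E) →
      ∀ x ∈ hull ℝ (B : Set E), ∃ β : E → ℝ, (∀ v ∈ B, 0 ≤ β v) ∧
        ∑ v ∈ B, β v • v = x ∧ δ * ∑ v ∈ B, β v ≤ ‖x‖ := fun B => by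
    by_cases hB : (0 : E) ∉ convexHull ℝ (B : Set E)
    · obtain ⟨δ, hδ, h⟩ := exists_pos_mul_sum_le_norm_of_zero_notMem hB
      exact ⟨δ, hδ, fun _ => h⟩
    · exact ⟨1, one_pos, fun h => absurd h hB⟩
  choose δB hδB_pos hδB using hδB
  have hne : G.powerset.Nonempty := ⟨∅, Finset.empty_mem_powerset G⟩
  refine ⟨G.powerset.inf' hne δB, (Finset.lt_inf'_iff hne).2 fun B _ => hδB_pos B,
    fun x hx => ?_⟩
  obtain ⟨B, hBG, hBind, hxB⟩ := exists_linearIndepOn_subset_of_mem_hull hx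
  obtain ⟨β, hβ, hβx, hβδ⟩ := hδB B (zero_notMem_convexHull_of_linearIndepOn hBind) x hxB
  have hGB : G ∩ B = B := Finset.inter_eq_right.2 hBG
  refine ⟨fun v => if v ∈ B then β v else 0, fun v _ => ?_, ?_, ?_⟩
  · dsimp only
    split_ifs with hv
    exacts [hβ v hv, le_rfl]
  · simpa only [ite_smul, zero_smul, Finset.sum_ite_mem, hGB] using hβx
  · rw [Finset.sum_ite_mem, hGB]
    calc G.powerset.inf' hne δB * ∑ v ∈ B, β v ≤ δB B * ∑ v ∈ B, β v := by
          gcongr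
          · exact Finset.sum_nonneg hβ
          · exact Finset.inf'_le _ (Finset.mem_powerset.2 hBG)
      _ ≤ ‖x‖ := hβδ

lemma exists_add_mem_hull_of_mem_hull_insert_neg [DecidableEq E] {G : Finset E} {x : E}
    (hx : x ∈ hull ℝ (G : Set E)) : ∃ ε > 0, ∀ w ∈ hull ℝ (↑(insert (-x) G) : Set E),
      ‖w‖ < ε → x + w ∈ hull ℝ (G : Set E) := by
  obtain ⟨δ, hδ, hrepr⟩ := exists_pos_mul_sum_le_norm (insert (-x) G)
  refine ⟨δ, hδ, fun w hw hwδ => ?_⟩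
  obtain ⟨β, hβ, rfl, hβδ⟩ := hrepr w hw
  have hx_mem := Finset.mem_insert_self (-x) G
  have hβx : β (-x) < 1 := by
    have hsum : ∑ v ∈ insert (-x) G, β v < 1 :=
      lt_of_mul_lt_mul_left (hβδ.trans_lt (by rwa [mul_one])) hδ.le
    exact (Finset.single_le_sum hβ hx_mem).trans_lt hsum
  have hrest : ∑ v ∈ (insert (-x) G).erase (-x), β v • v ∈ hull ℝ (G : Set E) :=
    Submodule.span_mono (Finset.coe_subset.2 (Finset.erase_insert_subset _ _))
      (mem_hull_finset_iff.2 ⟨β, fun v hv => hβ v (Finset.mem_of_mem_erase hv), rfl⟩)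
  rw [← Finset.add_sum_erase _ _ hx_mem,
    show ∀ r : E, x + (β (-x) • -x + r) = (1 - β (-x)) • x + r from fun r => by module]
  exact add_mem (smul_mem _ (by linarith) hx) hrest

lemma exists_sub_smul_mem_hull [DecidableEq E] {G : Finset E} {z : E}
    (hz : z ∈ hull ℝ (G : Set E)) :
    ∃ ε > 0, ∀ y ∈ hull ℝ (G : Set E), ‖y - z‖ < ε → ∀ η ∈ Icc 0 ε,
      y - η • z ∈ hull ℝ (G : Set E) := by
  obtain ⟨ε, hε, hloc⟩ := exists_add_mem_hull_of_mem_hull_insert_neg hz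
  refine ⟨ε / (1 + ‖z‖), by positivity, fun y hy hyz η hη => ?_⟩
  have hmem : y - z - η • z ∈ hull ℝ (↑(insert (-z) G) : Set E) := by
    rw [sub_eq_add_neg _ (η • z), ← smul_neg]
    exact add_mem (sub_mem_hull_insert_neg hy)
      (smul_mem _ hη.1 (subset_hull (Finset.mem_coe.2 (Finset.mem_insert_self _ _))))
  have hsmall : ‖y - z - η • z‖ < ε := calc
    ‖y - z - η • z‖ ≤ ‖y - z‖ + η * ‖z‖ :=
      (norm_sub_le _ _).trans_eq (by rw [norm_smul, Real.norm_of_nonneg hη.1])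
    _ < ε / (1 + ‖z‖) + ε / (1 + ‖z‖) * ‖z‖ :=
      add_lt_add_of_lt_of_le hyz (mul_le_mul_of_nonneg_right hη.2 (norm_nonneg z))
    _ = ε := by field_simp
  convert hloc _ hmem hsmall using 1
  abel

/-- If `a > 0`, the cone near `-(a • S)` still contains the points obtained by a short step in
direction `S`, so the minimal parameters `u k` could be decreased. -/
lemma eq_zero_of_tendsto_of_forall_notMem [DecidableEq E] {G : Finset E} {d : ℕ → E}
    {u : ℕ → ℝ} {a : ℝ} {S : E} (hd : Tendsto d atTop (𝓝 0)) (hu : Tendsto u atTop (𝓝 a))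
    (hu0 : ∀ k, 0 ≤ u k) (hmem : ∀ k, d k - u k • S ∈ hull ℝ (G : Set E))
    (hmin : ∀ k, ∀ v ∈ Ico 0 (u k), d k - v • S ∉ hull ℝ (G : Set E)) : a = 0 := by
  by_contra hne
  have ha : 0 < a := (ge_of_tendsto' hu hu0).lt_of_ne' hne
  have hy : Tendsto (fun k => d k - u k • S) atTop (𝓝 (-(a • S))) := by
    simpa using hd.sub (hu.smul_const S)
  have hz : -(a • S) ∈ hull ℝ (G : Set E) :=
    (isClosed_hull_finset G).mem_of_tendsto hy (Eventually.of_forall hmem)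
  obtain ⟨ε, hε, hnear⟩ := exists_sub_smul_mem_hull hz
  obtain ⟨k, hk_near, hk_u⟩ := ((tendsto_iff_norm_sub_tendsto_zero.1 hy).eventually
    (gt_mem_nhds hε) |>.and (hu.eventually (lt_mem_nhds (half_lt_self ha)))).exists
  set η := min ε (1 / 2)
  have hη : 0 < η := lt_min hε one_half_pos
  refine hmin k (u k - η * a) ⟨?_, sub_lt_self _ (mul_pos hη ha)⟩ ?_
  · nlinarith [min_le_right ε (1 / 2)]
  · convert hnear _ (hmem k) (by simpa using hk_near) η ⟨hη.le, min_le_left _ _⟩ using 1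
    module

lemma exists_tendsto_zero_sub_smul_mem_hull [DecidableEq E] {G : Finset E} {d : ℕ → E}
    {c : ℕ → ℝ} {S : E} (hd : Tendsto d atTop (𝓝 0)) (hc : ∀ m, 0 ≤ c m)
    (hbd : ∃ M, ∀ m, c m ≤ M) (hmem : ∀ m, d m - c m • S ∈ hull ℝ (G : Set E)) :
    ∃ u : ℕ → ℝ, (∀ m, u m ∈ Icc 0 (c m)) ∧ (∀ m, d m - u m • S ∈ hull ℝ (G : Set E)) ∧
      Tendsto u atTop (𝓝 0) := by
  set U : ℕ → Set ℝ := fun m => {v ∈ Icc 0 (c m) | d m - v • S ∈ hull ℝ (G : Set E)}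
  have hU : ∀ m, IsCompact (U m) := fun m =>
    isCompact_Icc.inter_right ((isClosed_hull_finset G).preimage (by fun_prop))
  have hU_min : ∀ m, sInf (U m) ∈ U m := fun m =>
    (hU m).sInf_mem ⟨c m, ⟨hc m, le_rfl⟩, hmem m⟩
  refine ⟨fun m => sInf (U m), fun m => (hU_min m).1, fun m => (hU_min m).2,
    tendsto_of_subseq_tendsto fun ns hns => ?_⟩
  obtain ⟨M, hM⟩ := hbd
  obtain ⟨a, -, φ, hφ, ha⟩ := (isCompact_Icc (a := 0) (b := M)).tendsto_subseq
    (x := fun k => sInf (U (ns k))) fun k => ⟨(hU_min _).1.1, (hU_min _).1.2.trans (hM _)⟩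
  obtain rfl : a = 0 := eq_zero_of_tendsto_of_forall_notMem
    (hd.comp (hns.comp hφ.tendsto_atTop)) ha (fun k => (hU_min _).1.1) (fun k => (hU_min _).2)
    fun k v hv hvU => hv.2.not_ge <|
      csInf_le (hU _).bddBelow ⟨⟨hv.1, hv.2.le.trans (hU_min _).1.2⟩, hvU⟩
  exact ⟨φ, ha⟩

end Topology

end PointedCone

lemma sub_smul_mem_segment {E : Type*} [AddCommGroup E] [Module ℝ E] (x v : E) {u c : ℝ}
    (hu : u ∈ Icc 0 c) : x - u • v ∈ segment ℝ x (x - c • v) := by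
  have h := image_segment ℝ (AffineMap.lineMap (k := ℝ) x (x - v)) 0 c
  rw [segment_eq_Icc (hu.1.trans hu.2)] at h
  have hf : ∀ t : ℝ, AffineMap.lineMap (k := ℝ) x (x - v) t = x - t • v := fun t => by
    rw [AffineMap.lineMap_apply_module']
    module
  simp only [hf, zero_smul, sub_zero] at h
  exact h ▸ mem_image_of_mem (fun t : ℝ => x - t • v) hu

open PointedCone

theorem segment_meets_cone_infinitely_often_general {N : ℕ}
    (s : Finset (Fin N → ℝ)) (P : Set (Fin N → ℝ))
    (hP : P = convexHull ℝ (s : Set (Fin N → ℝ)))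
    (D : Set (Fin N → ℝ)) (hD : D = {x | ∃ t : ℝ, 0 ≤ t ∧ ∃ p ∈ P, x = t • p})
    (Sig : Fin N → ℝ) (hSig : Sig ∈ D)
    (Sm : ℕ → Fin N → ℝ)
    (hlim : Tendsto Sm atTop (𝓝 Sig))
    (S : Fin N → ℝ)
    (c : ℕ → ℝ) (hc : ∀ m, 0 ≤ c m) (hbd : ∃ M, ∀ m, c m ≤ M)
    (Γ : ℕ → Fin N → ℝ) (hΓ : ∀ m, Γ m = Sm m - c m • S)
    (hmeet : ∀ m, (openSegment ℝ Sig (Γ m) ∩ D).Nonempty) :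
    {m : ℕ | (segment ℝ (Sm m) (Γ m) ∩ D).Nonempty}.Infinite := by
  have hs : s.Nonempty := by
    obtain ⟨-, -, p, hp, -⟩ := hD ▸ hSig
    exact Finset.coe_nonempty.1 (convexHull_nonempty_iff.1 ⟨p, hP ▸ hp⟩)
  obtain rfl : D = hull ℝ (s : Set (Fin N → ℝ)) := by
    ext x
    rw [hD, hP, SetLike.mem_coe, mem_hull_finset_iff_exists_smul_mem_convexHull hs]
    rfl
  have hΓ_mem : ∀ m, Sm m - Sig - c m • S ∈ hull ℝ (↑(insert (-Sig) s) : Set (Fin N → ℝ)) := by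
    intro m
    obtain ⟨x, ⟨a, b, -, hb, hab, rfl⟩, hx⟩ := hmeet m
    refine (smul_mem_iff _ hb).1 ?_
    convert sub_mem_hull_insert_neg (y := Sig) hx using 1
    rw [hΓ m, eq_sub_of_add_eq hab]
    module
  obtain ⟨u, hu, hu_mem, hu_lim⟩ :=
    exists_tendsto_zero_sub_smul_mem_hull (tendsto_sub_nhds_zero_iff.2 hlim) hc hbd hΓ_mem
  obtain ⟨ε, hε, hloc⟩ := exists_add_mem_hull_of_mem_hull_insert_neg hSig
  have hsmall : ∀ᶠ m in atTop, ‖Sm m - Sig - u m • S‖ < ε := by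
    have h := (tendsto_sub_nhds_zero_iff.2 hlim).sub (hu_lim.smul_const S)
    rw [zero_smul, sub_zero] at h
    exact h.norm.eventually (gt_mem_nhds (by rwa [norm_zero]))
  refine Nat.frequently_atTop_iff_infinite.1 (hsmall.mono fun m hm => ?_).frequently
  refine ⟨Sm m - u m • S, hΓ m ▸ sub_smul_mem_segment _ _ (hu m), ?_⟩
  simpa only [SetLike.mem_coe, ← add_sub_assoc, add_sub_cancel_left] using hloc _ (hu_mem m) hm

/-- Lemma 2.7, first claim. Let `P ⊆ ℝ^N` be a polytope not containing the origin and
`D = ℝ₊ · P`.  Let `Sig ∈ D \ {0}`, let `Sm` be a sequence of distinct points converging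
to `Sig`, let `S ≠ 0`, let `c m ≥ 0` be a bounded sequence, and `Γ m = Sm m - c m • S`.
If the open segment `(Sig, Γ m)` meets `D` for every `m`, then for infinitely many `m`
there exists a point of the closed segment `[Sm m, Γ m]` lying in `D`. -/
theorem segment_meets_cone_infinitely_often {N : ℕ}
    (s : Finset (Fin N → ℝ)) (P : Set (Fin N → ℝ))
    (hP : P = convexHull ℝ (s : Set (Fin N → ℝ))) (h0 : (0 : Fin N → ℝ) ∉ P)
    (D : Set (Fin N → ℝ)) (hD : D = {x | ∃ t : ℝ, 0 ≤ t ∧ ∃ p ∈ P, x = t • p})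
    (Sig : Fin N → ℝ) (hSig : Sig ∈ D) (hSig0 : Sig ≠ 0)
    (Sm : ℕ → Fin N → ℝ) (hinj : Function.Injective Sm)
    (hlim : Tendsto Sm atTop (𝓝 Sig))
    (S : Fin N → ℝ) (hS : S ≠ 0)
    (c : ℕ → ℝ) (hc : ∀ m, 0 ≤ c m) (hbd : ∃ M, ∀ m, c m ≤ M)
    (Γ : ℕ → Fin N → ℝ) (hΓ : ∀ m, Γ m = Sm m - c m • S)
    (hmeet : ∀ m, (openSegment ℝ Sig (Γ m) ∩ D).Nonempty) :
    {m : ℕ | (segment ℝ (Sm m) (Γ m) ∩ D).Nonempty}.Infinite :=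
  segment_meets_cone_infinitely_often_general s P hP D hD Sig hSig Sm hlim S c hc hbd Γ hΓ hmeet
end

section
/- Let P ⊆ R^N be a polytope not containing the origin and D = R_+ · P. Let Σ ∈ D \ {0}, let Σ_m be a sequence of distinct points converging to Σ, let S ∈ R^N \ {0}, let c_m ≥ 0 be a bounded sequence, and set Γ_m = Σ_m − c_m S. Assume that for every m: the open segment (Σ, Γ_m) meets D, Γ_m ∈ D, and the open segment (Σ_m, Γ_m) does not meet D. Then c_m → 0, i.e., Γ_m converges to Σ. -/
open Set Filter Topology

/-!
The cone `D` is finitely generated, so by Fourier–Motzkin elimination it is cut out by finitely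
many inequalities `0 ≤ ℓ x`. Suppose `c` had a cluster point `c₀ > 0`. The midpoints
`Sm m - (c m / 2) • S` lie on the open segments `(Sm m, Γ m)`, hence outside `D`, and along a
subsequence they converge to the midpoint `y` of `Sig` and `Sig - c₀ • S`, both in `D`. Near `y`
only inequalities active at `y` can fail; but `ℓ y = 0` together with `ℓ Sig ≥ 0` and
`ℓ (Sig - c₀ • S) ≥ 0` forces `ℓ S = 0`, so such an `ℓ` takes the same value at the midpoint as at
`Γ m ∈ D`, a contradiction.
-/

lemma exists_nonneg_forall_mul_le_iff {𝕜 ι : Type*} [Field 𝕜] [LinearOrder 𝕜]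
    [IsStrictOrderedRing 𝕜] (I : Finset ι) (a b : ι → 𝕜) :
    (∃ t : 𝕜, 0 ≤ t ∧ ∀ i ∈ I, t * a i ≤ b i) ↔
      (∀ i ∈ I, 0 ≤ a i → 0 ≤ b i) ∧
        ∀ i ∈ I, ∀ j ∈ I, a i < 0 → 0 < a j → a i * b j ≤ a j * b i := by
  constructor
  · rintro ⟨t, ht, hab⟩
    refine ⟨fun i hi hai => (mul_nonneg ht hai).trans (hab i hi), fun i hi j hj hai haj => ?_⟩
    nlinarith [hab i hi, hab j hj]
  · rintro ⟨hnonneg, hpair⟩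
    -- the witness is the largest of `0` and the lower bounds `b i / a i` imposed by `a i < 0`
    set lower := insert 0 ((I.filter (a · < 0)).image fun i => b i / a i)
    have hupper : ∀ j ∈ I, 0 < a j → ∀ r ∈ lower, r ≤ b j / a j := by
      intro j hj haj r hr
      simp only [lower, Finset.mem_insert, Finset.mem_image, Finset.mem_filter] at hr
      rcases hr with rfl | ⟨i, ⟨hi, hai⟩, rfl⟩
      · exact div_nonneg (hnonneg j hj haj.le) haj.le
      · rw [div_le_iff_of_neg hai, div_mul_eq_mul_div, div_le_iff₀ haj]
        linarith [hpair i hi j hj hai haj]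
    have h0 : (0 : 𝕜) ∈ lower := Finset.mem_insert_self _ _
    refine ⟨lower.max' ⟨0, h0⟩, lower.le_max' 0 h0, fun i hi => ?_⟩
    rcases lt_trichotomy (a i) 0 with hai | hai | hai
    · rw [← div_le_iff_of_neg hai]
      exact lower.le_max' _ (Finset.mem_insert_of_mem (Finset.mem_image_of_mem _
        (Finset.mem_filter.2 ⟨hi, hai⟩)))
    · simpa [hai] using hnonneg i hi hai.ge
    · rw [← le_div_iff₀ hai]
      exact lower.max'_le _ _ (hupper i hi hai)

namespace PointedCone

section Ring
variable {R E : Type*} [Ring R] [PartialOrder R] [IsOrderedRing R] [AddCommGroup E] [Module R E]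

lemma mem_hull_insert_iff {a x : E} {s : Set E} :
    x ∈ hull R (insert a s) ↔ ∃ t : R, 0 ≤ t ∧ x - t • a ∈ hull R s := by
  rw [Submodule.mem_span_insert]
  constructor
  · rintro ⟨t, z, hz, rfl⟩
    exact ⟨t, t.2, by simpa [Nonneg.coe_smul] using hz⟩
  · rintro ⟨t, ht, hz⟩
    exact ⟨⟨t, ht⟩, _, hz, by simp [Nonneg.mk_smul]⟩

end Ring

variable {𝕜 E : Type*} [Field 𝕜] [LinearOrder 𝕜] [IsStrictOrderedRing 𝕜] [AddCommGroup E]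
  [Module 𝕜 E]

lemma mem_dual_id_finset {L : Finset (Module.Dual 𝕜 E)} {x : E} :
    x ∈ dual .id (L : Set (Module.Dual 𝕜 E)) ↔ ∀ ℓ ∈ L, 0 ≤ ℓ x := by
  simp

/-- Fourier–Motzkin elimination of one generator. -/
lemma exists_mem_dual_iff_exists_sub_smul_mem (L : Finset (Module.Dual 𝕜 E)) (v : E) :
    ∃ L' : Finset (Module.Dual 𝕜 E), ∀ x, x ∈ dual .id (L' : Set (Module.Dual 𝕜 E)) ↔
      ∃ t : 𝕜, 0 ≤ t ∧ x - t • v ∈ dual .id (L : Set (Module.Dual 𝕜 E)) := by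
  classical
  refine ⟨L.filter (0 ≤ · v) ∪ ((L ×ˢ L).filter fun p => p.1 v < 0 ∧ 0 < p.2 v).image
    fun p => p.2 v • p.1 - p.1 v • p.2, fun x => ?_⟩
  simp only [mem_dual_id_finset, Finset.forall_mem_union, Finset.forall_mem_image,
    Finset.mem_filter, Finset.mem_product, Prod.forall, and_imp, LinearMap.sub_apply,
    LinearMap.smul_apply, map_sub, map_smul, smul_eq_mul, sub_nonneg,
    exists_nonneg_forall_mul_le_iff]
  exact and_congr_right' ⟨fun h i hi j hj => h i j hi hj, fun h i j hi hj => h i hi j hj⟩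

lemma dualFG_bot [FiniteDimensional 𝕜 E] : (⊥ : PointedCone 𝕜 E).DualFG .id := by
  classical
  let b := Module.finBasis 𝕜 E
  refine ⟨Finset.univ.image b.coord ∪ Finset.univ.image (-b.coord ·), ?_⟩
  ext x
  simp only [mem_dual_id_finset, Finset.forall_mem_union, Finset.forall_mem_image,
    Finset.mem_univ, true_imp_iff, LinearMap.neg_apply, neg_nonneg, ← le_antisymm_iff,
    ← forall_and, Submodule.mem_bot, eq_comm (a := (0 : 𝕜)), b.forall_coord_eq_zero_iff]

theorem dualFG_hull_finset [FiniteDimensional 𝕜 E] (s : Finset E) :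
    (hull 𝕜 (s : Set E)).DualFG .id := by
  classical
  induction s using Finset.induction_on with
  | empty => simpa using dualFG_bot
  | insert a s _ ih =>
    obtain ⟨L, hL⟩ := ih
    obtain ⟨L', hL'⟩ := exists_mem_dual_iff_exists_sub_smul_mem L a
    refine ⟨L', SetLike.ext fun x => ?_⟩
    rw [hL', Finset.coe_insert, mem_hull_insert_iff, hL]

lemma mem_hull_iff_exists_smul_mem_convexHull {s : Set E} (hs : s.Nonempty) {x : E} :
    x ∈ hull 𝕜 s ↔ ∃ t : 𝕜, 0 ≤ t ∧ ∃ p ∈ convexHull 𝕜 s, x = t • p := by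
  constructor
  · intro hx
    induction hx using Submodule.span_induction with
    | mem y hy => exact ⟨1, zero_le_one, y, subset_convexHull 𝕜 s hy, (one_smul _ _).symm⟩
    | zero =>
      obtain ⟨y, hy⟩ := hs
      exact ⟨0, le_rfl, y, subset_convexHull 𝕜 s hy, (zero_smul _ _).symm⟩
    | add y z _ _ hy hz =>
      obtain ⟨t, ht, p, hp, rfl⟩ := hy
      obtain ⟨u, hu, q, hq, rfl⟩ := hz
      rcases ht.eq_or_lt with rfl | ht
      · exact ⟨u, hu, q, hq, by simp⟩
      rcases hu.eq_or_lt with rfl | hu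
      · exact ⟨t, ht.le, p, hp, by simp⟩
      set K := ConvexCone.hull 𝕜 (convexHull 𝕜 s)
      have hK {r : 𝕜} (hr : 0 < r) {w} (hw : w ∈ convexHull 𝕜 s) : r • w ∈ K :=
        K.smul_mem hr (ConvexCone.subset_hull hw)
      obtain ⟨r, hr, w, hw, hsum⟩ := (ConvexCone.mem_hull_of_convex (convex_convexHull 𝕜 s)).1
        (K.add_mem (hK ht hp) (hK hu hq))
      exact ⟨r, hr.le, w, hw, hsum.symm⟩
    | smul r y _ hy =>
      obtain ⟨t, ht, p, hp, rfl⟩ := hy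
      exact ⟨r * t, mul_nonneg r.2 ht, p, hp, by rw [← Nonneg.coe_smul, smul_smul]⟩
  · rintro ⟨t, ht, p, hp, rfl⟩
    exact (hull 𝕜 s).smul_mem ht (convexHull_min subset_hull (hull 𝕜 s).convex hp)

end PointedCone

section Topology

variable {E : Type*} [AddCommGroup E] [Module ℝ E] [TopologicalSpace E] [IsTopologicalAddGroup E]
  [ContinuousSMul ℝ E] [T2Space E] [FiniteDimensional ℝ E]

lemma PointedCone.DualFG.eq_zero_of_tendsto {C : PointedCone ℝ E} (hC : C.DualFG .id)
    {σ S : E} {x : ℕ → E} {c : ℕ → ℝ} {c₀ : ℝ}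
    (hx : Tendsto x atTop (𝓝 σ)) (hc : Tendsto c atTop (𝓝 c₀)) (hσ : σ ∈ C)
    (hmem : ∀ n, x n - c n • S ∈ C) (hmid : ∀ n, x n - (c n / 2) • S ∉ C) : c₀ = 0 := by
  obtain ⟨L, rfl⟩ := hC
  by_contra hc₀
  have hcont (ℓ : Module.Dual ℝ E) : Continuous ℓ := ℓ.continuous_of_finiteDimensional
  set y := σ - (c₀ / 2) • S
  have hy : Tendsto (fun n => x n - (c n / 2) • S) atTop (𝓝 y) :=
    hx.sub ((hc.div_const 2).smul_const S)
  have hlim : σ - c₀ • S ∈ dual .id (L : Set (Module.Dual ℝ E)) :=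
    mem_dual_id_finset.2 fun ℓ hℓ => ge_of_tendsto (((hcont ℓ).tendsto _).comp
      (hx.sub (hc.smul_const S))) (Eventually.of_forall fun n => mem_dual_id_finset.1 (hmem n) ℓ hℓ)
  have hnear : ∀ᶠ n in atTop, ∀ ℓ ∈ L.filter (0 < · y), 0 < ℓ (x n - (c n / 2) • S) :=
    (eventually_all_finset _).2 fun ℓ hℓ =>
      (((hcont ℓ).tendsto y).comp hy).eventually_const_lt (Finset.mem_filter.1 hℓ).2
  obtain ⟨n, hn⟩ := hnear.exists
  obtain ⟨ℓ, hℓ, hneg⟩ : ∃ ℓ ∈ L, ℓ (x n - (c n / 2) • S) < 0 := by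
    simpa [mem_dual_id_finset] using hmid n
  have hℓy : ℓ y ≤ 0 := not_lt.1 fun h => (hn ℓ (Finset.mem_filter.2 ⟨hℓ, h⟩)).not_gt hneg
  have hℓσ := mem_dual_id_finset.1 hσ ℓ hℓ
  have hℓlim := mem_dual_id_finset.1 hlim ℓ hℓ
  have hℓΓ := mem_dual_id_finset.1 (hmem n) ℓ hℓ
  simp only [y, map_sub, map_smul, smul_eq_mul] at hℓy hℓlim hℓΓ hneg
  have hℓS : ℓ S = 0 := by
    have : c₀ * ℓ S = 0 := by linarith
    exact (mul_eq_zero.1 this).resolve_left hc₀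
  rw [hℓS] at hneg hℓΓ
  linarith

end Topology

theorem gamma_tendsto_sigma_general {N : ℕ}
    (s : Finset (Fin N → ℝ)) (P : Set (Fin N → ℝ))
    (hP : P = convexHull ℝ (s : Set (Fin N → ℝ)))
    (D : Set (Fin N → ℝ)) (hD : D = {x | ∃ t : ℝ, 0 ≤ t ∧ ∃ p ∈ P, x = t • p})
    (Sig : Fin N → ℝ) (hSig : Sig ∈ D)
    (Sm : ℕ → Fin N → ℝ)
    (hlim : Tendsto Sm atTop (𝓝 Sig))
    (S : Fin N → ℝ)
    (c : ℕ → ℝ) (hc : ∀ m, 0 ≤ c m) (hbd : ∃ M, ∀ m, c m ≤ M)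
    (Γ : ℕ → Fin N → ℝ) (hΓ : ∀ m, Γ m = Sm m - c m • S)
    (hΓD : ∀ m, Γ m ∈ D)
    (hnomeet : ∀ m, openSegment ℝ (Sm m) (Γ m) ∩ D = ∅) :
    Tendsto c atTop (𝓝 0) ∧ Tendsto Γ atTop (𝓝 Sig) := by
  have hs : (s : Set (Fin N → ℝ)).Nonempty := by
    obtain ⟨-, -, p, hp, -⟩ := hD ▸ hSig
    exact convexHull_nonempty_iff.1 ⟨p, hP ▸ hp⟩
  have hD_hull : D = PointedCone.hull ℝ (s : Set (Fin N → ℝ)) := by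
    ext x
    rw [hD, hP, mem_ofPred_eq, SetLike.mem_coe,
      PointedCone.mem_hull_iff_exists_smul_mem_convexHull hs]
  have hmid (m : ℕ) : Sm m - (c m / 2) • S ∉ D := fun hm =>
    eq_empty_iff_forall_notMem.1 (hnomeet m) _
      ⟨⟨1 / 2, 1 / 2, by norm_num, by norm_num, by norm_num, by rw [hΓ]; module⟩, hm⟩
  subst hD_hull
  obtain ⟨M, hM⟩ := hbd
  have hc_lim : Tendsto c atTop (𝓝 0) :=
    isCompact_Icc.tendsto_nhds_of_unique_mapClusterPt (.of_forall fun m => ⟨hc m, hM m⟩)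
      fun c₀ _ hc₀ => by
        obtain ⟨ψ, hψ, hcψ⟩ := hc₀.tendsto_subseq
        exact (PointedCone.dualFG_hull_finset s).eq_zero_of_tendsto (hlim.comp hψ.tendsto_atTop)
          hcψ hSig (fun n => hΓ (ψ n) ▸ hΓD (ψ n)) fun n => hmid (ψ n)
  refine ⟨hc_lim, ?_⟩
  simpa only [funext hΓ, zero_smul, sub_zero] using hlim.sub (hc_lim.smul_const S)

/-- Lemma 2.7, second claim. Let `P ⊆ ℝ^N` be a polytope not containing the origin and
`D = ℝ₊ · P`.  Let `Sig ∈ D \ {0}`, let `Sm` be a sequence of distinct points converging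
to `Sig`, let `S ≠ 0`, let `c m ≥ 0` be a bounded sequence, and `Γ m = Sm m - c m • S`.
Assume for every `m` that the open segment `(Sig, Γ m)` meets `D`, that `Γ m ∈ D`, and
that the open segment `(Sm m, Γ m)` does not meet `D`.  Then `c m → 0`, i.e. `Γ m`
converges to `Sig`. -/
theorem gamma_tendsto_sigma {N : ℕ}
    (s : Finset (Fin N → ℝ)) (P : Set (Fin N → ℝ))
    (hP : P = convexHull ℝ (s : Set (Fin N → ℝ))) (h0 : (0 : Fin N → ℝ) ∉ P)
    (D : Set (Fin N → ℝ)) (hD : D = {x | ∃ t : ℝ, 0 ≤ t ∧ ∃ p ∈ P, x = t • p})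
    (Sig : Fin N → ℝ) (hSig : Sig ∈ D) (hSig0 : Sig ≠ 0)
    (Sm : ℕ → Fin N → ℝ) (hinj : Function.Injective Sm)
    (hlim : Tendsto Sm atTop (𝓝 Sig))
    (S : Fin N → ℝ) (hS : S ≠ 0)
    (c : ℕ → ℝ) (hc : ∀ m, 0 ≤ c m) (hbd : ∃ M, ∀ m, c m ≤ M)
    (Γ : ℕ → Fin N → ℝ) (hΓ : ∀ m, Γ m = Sm m - c m • S)
    (hmeet : ∀ m, (openSegment ℝ Sig (Γ m) ∩ D).Nonempty)
    (hΓD : ∀ m, Γ m ∈ D)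
    (hnomeet : ∀ m, openSegment ℝ (Sm m) (Γ m) ∩ D = ∅) :
    Tendsto c atTop (𝓝 0) ∧ Tendsto Γ atTop (𝓝 Sig) :=
  gamma_tendsto_sigma_general s P hP D hD Sig hSig Sm hlim S c hc hbd Γ hΓ hΓD hnomeet
end

section
/- If C ⊆ R^N is a rational polyhedral cone, then C ∩ Z^N is a finitely generated monoid (Gordan's Lemma). -/
/-!
Scaling each rational generator of the cone by a positive integer makes it integral and does not
change the cone. An integral point `x = ∑ t w • w` (`t ≥ 0`) of the cone then splits as
`∑ ⌊t w⌋ • w + y`, where `y = ∑ (t w - ⌊t w⌋) • w` is again an integral point of the cone, of norm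
at most `∑ ‖w‖`. There are only finitely many such `y`, so together with the integral generators
they generate the monoid of integral points of the cone.
-/

open Set

namespace PointedCone

theorem mem_hull_finset {R E : Type*} [Semiring R] [PartialOrder R] [IsOrderedRing R]
    [AddCommMonoid E] [Module R E] {s : Finset E} {x : E} :
    x ∈ hull R (s : Set E) ↔ ∃ c : E → R, (∀ v, 0 ≤ c v) ∧ x = ∑ v ∈ s, c v • v := by
  constructor
  · intro hx
    obtain ⟨f, -, rfl⟩ := Submodule.mem_span_finset.mp hx
    exact ⟨fun v => f v, fun v => (f v).2, rfl⟩
  · rintro ⟨c, hc, rfl⟩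
    exact Submodule.sum_mem _ fun v hv => Submodule.smul_mem _ ⟨c v, hc v⟩ (subset_hull hv)

theorem hull_image_smul_of_pos {𝕜 E : Type*} [Field 𝕜] [LinearOrder 𝕜] [IsStrictOrderedRing 𝕜]
    [AddCommMonoid E] [Module 𝕜 E] {s : Set E} {d : E → 𝕜} (hd : ∀ v ∈ s, 0 < d v) :
    hull 𝕜 ((fun v => d v • v) '' s) = hull 𝕜 s := by
  apply le_antisymm <;> rw [Submodule.span_le]
  · rintro _ ⟨v, hv, rfl⟩
    exact Submodule.smul_mem _ ⟨d v, (hd v hv).le⟩ (subset_hull hv)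
  · intro v hv
    have hv' : v = (d v)⁻¹ • d v • v := by rw [smul_smul, inv_mul_cancel₀ (hd v hv).ne', one_smul]
    rw [hv']
    exact Submodule.smul_mem _ ⟨(d v)⁻¹, inv_nonneg.mpr (hd v hv).le⟩
      (subset_hull (mem_image_of_mem (fun v => d v • v) hv))

theorem exists_nsmul_sum_add_of_mem_hull {E : Type*} [SeminormedAddCommGroup E] [NormedSpace ℝ E]
    {s : Finset E} {x : E} (hx : x ∈ hull ℝ (s : Set E)) :
    ∃ n : E → ℕ, ∃ y ∈ hull ℝ (s : Set E), ‖y‖ ≤ ∑ w ∈ s, ‖w‖ ∧ x = ∑ w ∈ s, n w • w + y := by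
  obtain ⟨t, ht, rfl⟩ := mem_hull_finset.mp hx
  have hfract : ∀ w, 0 ≤ t w - ⌊t w⌋₊ ∧ t w - ⌊t w⌋₊ < 1 := fun w =>
    ⟨sub_nonneg.mpr (Nat.floor_le (ht w)), by linarith [Nat.lt_floor_add_one (t w)]⟩
  refine ⟨fun w => ⌊t w⌋₊, ∑ w ∈ s, (t w - ⌊t w⌋₊) • w,
    mem_hull_finset.mpr ⟨_, fun w => (hfract w).1, rfl⟩, ?_, ?_⟩
  · calc ‖∑ w ∈ s, (t w - ⌊t w⌋₊) • w‖ ≤ ∑ w ∈ s, ‖(t w - ⌊t w⌋₊) • w‖ := norm_sum_le _ _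
      _ ≤ ∑ w ∈ s, ‖w‖ := Finset.sum_le_sum fun w _ => by
        rw [norm_smul, Real.norm_of_nonneg (hfract w).1]
        exact mul_le_of_le_one_left (norm_nonneg w) (hfract w).2.le
  · rw [← Finset.sum_add_distrib]
    refine Finset.sum_congr rfl fun w _ => ?_
    rw [← Nat.cast_smul_eq_nsmul ℝ, ← add_smul, add_sub_cancel]

end PointedCone

open PointedCone

def intLattice (ι : Type*) : AddSubgroup (ι → ℝ) :=
  AddSubgroup.pi univ fun _ => (Int.castAddHom ℝ).range

variable {ι : Type*}

theorem mem_intLattice {x : ι → ℝ} : x ∈ intLattice ι ↔ ∀ i, ∃ z : ℤ, x i = z := by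
  simp only [intLattice, AddSubgroup.mem_pi, mem_univ, true_implies, AddMonoidHom.mem_range,
    Int.coe_castAddHom, eq_comm]

theorem exists_nat_smul_mem_intLattice [Fintype ι] {v : ι → ℝ} (hv : ∀ i, ∃ q : ℚ, v i = q) :
    ∃ d : ℕ, 0 < d ∧ (d : ℝ) • v ∈ intLattice ι := by
  choose q hq using hv
  refine ⟨∏ i, (q i).den, Finset.prod_pos fun i _ => (q i).pos, mem_intLattice.mpr fun i => ?_⟩
  obtain ⟨m, hm⟩ := Finset.dvd_prod_of_mem (fun j => (q j).den) (Finset.mem_univ i)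
  refine ⟨m * (q i).num, ?_⟩
  rw [Pi.smul_apply, smul_eq_mul, hq i, hm, Rat.cast_def]
  push_cast
  field_simp

theorem finite_intLattice_inter_closedBall [Fintype ι] (r : ℝ) :
    ((intLattice ι : Set (ι → ℝ)) ∩ Metric.closedBall 0 r).Finite := by
  classical
  refine ((Set.finite_Icc (fun _ : ι => -⌈r⌉) fun _ => ⌈r⌉).image
    fun (z : ι → ℤ) i => (z i : ℝ)).subset ?_
  rintro y ⟨hy, hyr⟩
  choose z hz using mem_intLattice.mp hy
  have hzr : ∀ i, |z i| ≤ ⌈r⌉ := fun i => by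
    have := (norm_le_pi_norm y i).trans (mem_closedBall_zero_iff.mp hyr)
    rw [hz, Real.norm_eq_abs, ← Int.cast_abs] at this
    exact Int.cast_le.mp (this.trans (Int.le_ceil r))
  exact ⟨z, ⟨fun i => (abs_le.mp (hzr i)).1, fun i => (abs_le.mp (hzr i)).2⟩,
    funext fun i => (hz i).symm⟩

theorem fg_hull_inf_intLattice [Fintype ι] {s : Finset (ι → ℝ)}
    (hs : (s : Set (ι → ℝ)) ⊆ intLattice ι) :
    ((hull ℝ (s : Set (ι → ℝ))).toAddSubmonoid ⊓ (intLattice ι).toAddSubmonoid).FG := by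
  have hF : ((hull ℝ (s : Set (ι → ℝ)) : Set (ι → ℝ)) ∩
      ((intLattice ι : Set (ι → ℝ)) ∩ Metric.closedBall 0 (∑ w ∈ s, ‖w‖))).Finite :=
    (finite_intLattice_inter_closedBall _).subset inter_subset_right
  refine ⟨s ∪ hF.toFinset, le_antisymm ?_ ?_⟩
  · rw [AddSubmonoid.closure_le, Finset.coe_union, Finite.coe_toFinset]
    rintro g (hg | hg)
    · exact ⟨subset_hull hg, hs hg⟩
    · exact ⟨hg.1, hg.2.1⟩
  · rintro x ⟨hx, hxZ⟩
    obtain ⟨n, y, hy, hyr, rfl⟩ := exists_nsmul_sum_add_of_mem_hull hx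
    have hsum : ∑ w ∈ s, n w • w ∈ intLattice ι :=
      AddSubgroup.sum_mem _ fun w hw => AddSubgroup.nsmul_mem _ (hs hw) _
    have hyZ : y ∈ intLattice ι := (AddSubgroup.add_mem_cancel_left _ hsum).mp hxZ
    refine add_mem (AddSubmonoid.sum_mem _ fun w hw => AddSubmonoid.nsmul_mem _
      (AddSubmonoid.subset_closure (Finset.mem_union_left _ hw)) _) ?_
    refine AddSubmonoid.subset_closure (Finset.mem_union_right _ ?_)
    exact hF.mem_toFinset.mpr ⟨hy, hyZ, mem_closedBall_zero_iff.mpr hyr⟩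

theorem fg_hull_inf_intLattice_of_rat [Fintype ι] {s : Finset (ι → ℝ)}
    (hs : ∀ v ∈ s, ∀ i, ∃ q : ℚ, v i = q) :
    ((hull ℝ (s : Set (ι → ℝ))).toAddSubmonoid ⊓ (intLattice ι).toAddSubmonoid).FG := by
  choose! d hd_pos hd using fun v hv => exists_nat_smul_mem_intLattice (hs v hv)
  rw [← hull_image_smul_of_pos (d := fun v => (d v : ℝ)) fun v hv => Nat.cast_pos.mpr (hd_pos v hv),
    ← Finset.coe_image]
  refine fg_hull_inf_intLattice ?_
  rw [Finset.coe_image]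
  exact image_subset_iff.mpr hd

/-- Gordan's Lemma.  If `C ⊆ ℝ^N` is a rational polyhedral cone (the set of nonnegative
real combinations of finitely many rational vectors), then the monoid `C ∩ ℤ^N` of
integral points of `C` is a finitely generated monoid. -/
theorem gordan {N : ℕ} (C : Set (Fin N → ℝ))
    (hC : ∃ s : Finset (Fin N → ℝ), (∀ v ∈ s, ∀ i, ∃ q : ℚ, v i = (q : ℝ)) ∧
      C = {x | ∃ c : (Fin N → ℝ) → ℝ, (∀ v, 0 ≤ c v) ∧ x = ∑ v ∈ s, c v • v}) :
    ∃ G : Finset (Fin N → ℝ),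
      ((G : Set (Fin N → ℝ)) ⊆ {x ∈ C | ∀ i, ∃ z : ℤ, x i = (z : ℝ)}) ∧
      ∀ x ∈ C, (∀ i, ∃ z : ℤ, x i = (z : ℝ)) →
        ∃ a : (Fin N → ℝ) → ℕ, x = ∑ v ∈ G, (a v : ℝ) • v := by
  obtain ⟨s, hs, rfl⟩ := hC
  obtain ⟨G, hG⟩ := fg_hull_inf_intLattice_of_rat hs
  refine ⟨G, fun g hg => ?_, fun x hx hxZ => ?_⟩
  · obtain ⟨hgC, hgZ⟩ : g ∈ _ ⊓ _ := hG ▸ AddSubmonoid.subset_closure hg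
    exact ⟨mem_hull_finset.mp hgC, mem_intLattice.mp hgZ⟩
  · have hxG : x ∈ AddSubmonoid.closure (G : Set (Fin N → ℝ)) :=
      hG ▸ ⟨mem_hull_finset.mpr hx, mem_intLattice.mpr hxZ⟩
    obtain ⟨a, -, hax⟩ := AddSubmonoid.mem_closure_finset.mp hxG
    exact ⟨a, by simpa only [Nat.cast_smul_eq_nsmul] using hax.symm⟩
end

section
/- Let P ⊆ R^N be a rational polytope, x ∈ P, k a positive integer, and ε > 0. Then there exist finitely many points x_1, …, x_m ∈ P and positive integers k_1, …, k_m divisible by k, such that (k_i / k) x_i ∈ Z^N, ‖x − x_i‖ < ε / k_i for each i, and x is a convex linear combination of the x_i. -/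
/-!
Write `x = ∑ wᵢ vᵢ` with rational vertices `vᵢ` and weights `wᵢ > 0`. Call `q` a `δ`-approximant
of a real vector `y` if `T q` is integral and `‖y - q‖ < δ / T` for some `T ≥ 1`. Every real vector
is the image, under an affine map with rational coefficients, of a vector `z` with `1, z₁, …, zₑ`
linearly independent over `ℚ`, and such maps send approximants to approximants. For such `z`,
Kronecker's theorem gives approximants `p / t` with `t z - p` close to any prescribed small vector;
aiming at the vertices of a simplex around `0` exhibits `z` as a convex combination of them. Hence
`w` is a convex combination of its own approximants, and for small `δ` these are again weight
vectors: they are positive, and `T ∑ q` is an integer within `1` of `T`. Mapping them by `vᵢ`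
gives the required points of `P`.
-/

open Set

/-- A point of `ℝ^N` with all coordinates rational. -/
def IsRatPoint {N : ℕ} (x : Fin N → ℝ) : Prop := ∀ i, ∃ q : ℚ, x i = (q : ℝ)

/-- A rational polytope: the convex hull of finitely many rational points. -/
def IsRatPolytope {N : ℕ} (P : Set (Fin N → ℝ)) : Prop :=
  ∃ s : Finset (Fin N → ℝ), (∀ v ∈ s, IsRatPoint v) ∧ P = convexHull ℝ (s : Set (Fin N → ℝ))

open Filter Topology Module Submodule

section ClosedSubgroup

variable {E : Type*} [NormedAddCommGroup E] [NormedSpace ℝ E] [FiniteDimensional ℝ E]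

theorem AddSubgroup.exists_ne_zero_forall_smul_mem_of_not_discrete (H : AddSubgroup E)
    (hH : IsClosed (H : Set E)) (hnd : ∀ ε > 0, ∃ x ∈ H, ‖x‖ < ε ∧ x ≠ 0) :
    ∃ u ≠ (0 : E), ∀ s : ℝ, s • u ∈ H := by
  choose x hxH hxε hx0 using fun n : ℕ => hnd (1 / (n + 1)) Nat.one_div_pos_of_nat
  have hpos : ∀ n, 0 < ‖x n‖ := fun n => norm_pos_iff.mpr (hx0 n)
  have hsphere : ∀ n, ‖x n‖⁻¹ • x n ∈ Metric.sphere (0 : E) 1 := fun n => by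
    simp [norm_smul, (hpos n).ne']
  obtain ⟨u, hu, φ, hφ, hlim⟩ := (isCompact_sphere (0 : E) 1).tendsto_subseq hsphere
  refine ⟨u, ne_zero_of_mem_sphere one_ne_zero ⟨u, hu⟩, fun s => ?_⟩
  have hr : Tendsto (fun n => ‖x (φ n)‖) atTop (𝓝 0) :=
    squeeze_zero (fun n => (hpos _).le) (fun n => (hxε (φ n)).le)
      (tendsto_one_div_add_atTop_nhds_zero_nat.comp hφ.tendsto_atTop)
  -- `⌊s / r⌋ * r` is within `r` of `s`
  have hfloor : Tendsto (fun n => (⌊s / ‖x (φ n)‖⌋ : ℝ) * ‖x (φ n)‖) atTop (𝓝 s) := by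
    refine tendsto_iff_norm_sub_tendsto_zero.mpr (squeeze_zero_norm (fun n => ?_) hr)
    have h := hpos (φ n)
    have h1 := Int.floor_le (s / ‖x (φ n)‖)
    have h2 := Int.lt_floor_add_one (s / ‖x (φ n)‖)
    rw [le_div_iff₀ h] at h1
    rw [div_lt_iff₀ h] at h2
    rw [norm_norm, Real.norm_eq_abs, abs_le]
    constructor <;> nlinarith
  have hmem : ∀ n, (⌊s / ‖x (φ n)‖⌋ : ℝ) • x (φ n) ∈ H := fun n => by
    rw [Int.cast_smul_eq_zsmul]
    exact H.zsmul_mem (hxH (φ n)) _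
  refine hH.mem_of_tendsto ((hfloor.smul hlim).congr fun n => ?_) (Eventually.of_forall hmem)
  simp [smul_smul, (hpos (φ n)).ne']

theorem AddSubgroup.exists_ne_zero_map_mem_zmultiples_one_of_discrete [Nontrivial E]
    (H : AddSubgroup E) (hspan : span ℝ (H : Set E) = ⊤)
    (hdisc : ∃ ε > 0, ∀ x ∈ H, ‖x‖ < ε → x = 0) :
    ∃ φ : E →ₗ[ℝ] ℝ, φ ≠ 0 ∧ ∀ x ∈ H, φ x ∈ AddSubgroup.zmultiples (1 : ℝ) := by
  obtain ⟨ε, hε, hsmall⟩ := hdisc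
  let L : Submodule ℤ E := H.toIntSubmodule
  have : DiscreteTopology L := by
    rw [discreteTopology_iff_isOpen_singleton_zero]
    have : ({0} : Set L) = (↑) ⁻¹' Metric.ball (0 : E) ε := by
      ext y
      simp only [mem_singleton_iff, mem_preimage, Metric.mem_ball, dist_zero_right]
      exact ⟨fun h => h ▸ by simpa using hε, fun h => Subtype.ext (hsmall y y.2 h)⟩
    exact this ▸ isOpen_induced Metric.isOpen_ball
  have : IsZLattice ℝ L := ⟨hspan⟩
  let b := Module.Free.chooseBasis ℤ L
  let B := Basis.ofZLatticeBasis ℝ L b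
  obtain ⟨i⟩ := B.index_nonempty
  refine ⟨B.coord i, fun h => by simpa using LinearMap.congr_fun h (B i),
    fun x hx => ⟨b.repr ⟨x, hx⟩ i, ?_⟩⟩
  simpa [B] using (Basis.ofZLatticeBasis_repr_apply ℝ L b ⟨x, hx⟩ i).symm

theorem AddSubgroup.exists_ne_zero_map_mem_zmultiples (H : AddSubgroup E)
    (hH : IsClosed (H : Set E)) (hne : H ≠ ⊤) :
    ∃ φ : E →ₗ[ℝ] ℝ, φ ≠ 0 ∧ ∃ c : ℝ, ∀ x ∈ H, φ x ∈ AddSubgroup.zmultiples c := by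
  induction hn : finrank ℝ E using Nat.strong_induction_on generalizing E with
  | _ n ih =>
  have : Nontrivial E :=
    (subsingleton_or_nontrivial E).resolve_left fun _ => hne (Subsingleton.elim _ _)
  by_cases hspan : span ℝ (H : Set E) = ⊤
  swap
  · obtain ⟨φ, hφ, hker⟩ := exists_le_ker_of_lt_top _ (lt_top_iff_ne_top.mpr hspan)
    exact ⟨φ, hφ, 0, fun x hx => by simpa using hker (subset_span hx)⟩
  by_cases hdisc : ∃ ε > 0, ∀ x ∈ H, ‖x‖ < ε → x = 0
  · obtain ⟨φ, hφ, hφH⟩ := H.exists_ne_zero_map_mem_zmultiples_one_of_discrete hspan hdisc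
    exact ⟨φ, hφ, 1, hφH⟩
  push Not at hdisc
  -- `H` contains a line `ℝ u`; pass to `H ∩ W` for a complement `W` of that line.
  obtain ⟨u, hu, hline⟩ := H.exists_ne_zero_forall_smul_mem_of_not_discrete hH hdisc
  obtain ⟨W, hW⟩ := (span ℝ {u}).exists_isCompl
  let π := W.projectionOnto _ hW.symm
  have hπ : ∀ x, x - π x ∈ H := fun x => by
    have : x - π x ∈ span ℝ {u} := by
      rw [← projectionOnto_apply_eq_zero_iff hW.symm, map_sub, projectionOnto_apply_left,
        sub_self]
    obtain ⟨a, ha⟩ := mem_span_singleton.mp this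
    exact ha ▸ hline a
  let H' : AddSubgroup W := H.comap W.subtype.toAddMonoidHom
  have hπH : ∀ x ∈ H, π x ∈ H' := fun x hx => show (π x : E) ∈ H by
    simpa using H.sub_mem hx (hπ x)
  have hH' : H' ≠ ⊤ := fun htop => hne <| eq_top_iff.mpr fun x _ => by
    simpa using H.add_mem (hπ x) (htop ▸ AddSubgroup.mem_top (π x) : π x ∈ H')
  have hrank : finrank ℝ W < n := by
    have := finrank_add_eq_of_isCompl hW
    rw [finrank_span_singleton hu] at this
    omega
  obtain ⟨ψ, hψ, c, hc⟩ := ih _ hrank H' (hH.preimage continuous_subtype_val) hH' rfl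
  refine ⟨ψ ∘ₗ π, fun h => hψ ?_, c, fun x hx => hc _ (hπH x hx)⟩
  ext w
  simpa [π] using LinearMap.congr_fun h w

def intPoints (ι : Type*) : AddSubgroup (ι → ℝ) :=
  AddSubgroup.pi univ fun _ => (Int.castRingHom ℝ).range.toAddSubgroup

theorem mem_intPoints {ι : Type*} {q : ι → ℝ} : q ∈ intPoints ι ↔ ∀ i, ∃ n : ℤ, (n : ℝ) = q i := by
  simp [intPoints, AddSubgroup.mem_pi]

section Kronecker

variable {ι : Type*} [Fintype ι]

theorem eq_zero_of_mem_intPoints_of_norm_lt_one {p : ι → ℝ} (hp : p ∈ intPoints ι)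
    (h : ‖p‖ < 1) : p = 0 := by
  ext i
  obtain ⟨n, hn⟩ := mem_intPoints.mp hp i
  have : |(n : ℝ)| < 1 := hn ▸ (norm_le_pi_norm p i).trans_lt h
  rw [← hn, Pi.zero_apply, Int.cast_eq_zero, ← Int.abs_lt_one_iff]
  exact_mod_cast this

def IntRelationFree (z : ι → ℝ) : Prop :=
  ∀ (m : ι → ℤ) (n : ℤ), ∑ i, (m i : ℝ) * z i = n → m = 0

theorem IntRelationFree.dense [DecidableEq ι] {z : ι → ℝ} (hz : IntRelationFree z) :
    Dense ((intPoints ι ⊔ AddSubgroup.zmultiples z : AddSubgroup (ι → ℝ)) : Set (ι → ℝ)) := by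
  set Γ := intPoints ι ⊔ AddSubgroup.zmultiples z
  by_contra hΓ
  have hne : Γ.topologicalClosure ≠ ⊤ := fun h => hΓ <| by
    rw [dense_iff_closure_eq, ← Γ.topologicalClosure_coe, h, AddSubgroup.coe_top]
  obtain ⟨φ, hφ, c, hc⟩ :=
    Γ.topologicalClosure.exists_ne_zero_map_mem_zmultiples Γ.isClosed_topologicalClosure hne
  have hmem : ∀ x ∈ Γ, ∃ m : ℤ, φ x = m * c := fun x hx => by
    obtain ⟨m, hm⟩ := AddSubgroup.mem_zmultiples_iff.mp (hc x (Γ.le_topologicalClosure hx))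
    exact ⟨m, by rw [← hm, zsmul_eq_mul]⟩
  let e : ι → ι → ℝ := fun i j => if i = j then 1 else 0
  choose m hm using fun i => hmem (e i) (AddSubgroup.mem_sup_left <| mem_intPoints.mpr
    fun j => ⟨if i = j then 1 else 0, by split_ifs <;> simp [e, *]⟩)
  obtain ⟨n, hn⟩ := hmem z (AddSubgroup.mem_sup_right (AddSubgroup.mem_zmultiples z))
  -- `φ` vanishes on the standard basis: either `c = 0`, or `φ z = n c` is an integer relation.
  have hφe : ∀ i, φ (e i) = 0 := by
    by_cases hc0 : c = 0
    · simp [hm, hc0]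
    have hrel : ∑ i, (m i : ℝ) * z i = n := by
      apply mul_right_cancel₀ hc0
      rw [← hn, φ.pi_apply_eq_sum_univ z, Finset.sum_mul]
      exact Finset.sum_congr rfl fun i _ => by rw [smul_eq_mul, hm, mul_left_comm, mul_assoc]
    simp [hm, hz m n hrel]
  exact hφ <| LinearMap.ext fun x => by simp [φ.pi_apply_eq_sum_univ x, hφe, e]

theorem IntRelationFree.exists_int_smul_sub_lt [DecidableEq ι] {z : ι → ℝ}
    (hz : IntRelationFree z) (a : ι → ℝ) {ε : ℝ} (hε : 0 < ε) :
    ∃ n : ℤ, ∃ p ∈ intPoints ι, ‖(n : ℝ) • z - p - a‖ < ε := by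
  obtain ⟨γ, hγ, hγa⟩ := hz.dense.exists_dist_lt a hε
  obtain ⟨p, hp, _, ⟨n, rfl⟩, rfl⟩ := AddSubgroup.mem_sup.mp hγ
  refine ⟨n, -p, neg_mem hp, ?_⟩
  rw [dist_comm, dist_eq_norm] at hγa
  simpa [Int.cast_smul_eq_zsmul, add_comm] using hγa

theorem IntRelationFree.exists_nat_smul_sub_lt_of_nonempty [DecidableEq ι] [Nonempty ι]
    {z : ι → ℝ} (hz : IntRelationFree z) {ε : ℝ} (hε : 0 < ε) :
    ∃ n : ℕ, 0 < n ∧ ∃ p ∈ intPoints ι, ‖(n : ℝ) • z - p‖ < ε := by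
  -- Aim at the constant vector `ρ`: the approximant is small, but cannot be an integer point.
  set ρ := min ε 1 / 2
  have hρ0 : 0 < ρ := by positivity
  obtain ⟨n, p, hp, hnp⟩ := hz.exists_int_smul_sub_lt (fun _ => ρ) hρ0
  have hsmall : ‖(n : ℝ) • z - p‖ < min ε 1 := by
    calc ‖(n : ℝ) • z - p‖ ≤ ‖(n : ℝ) • z - p - fun _ => ρ‖ + ‖fun _ : ι => ρ‖ :=
          norm_le_norm_sub_add _ _
      _ < ρ + ρ := by rw [pi_norm_const, Real.norm_of_nonneg hρ0.le]; linarith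
      _ = min ε 1 := by ring
  have hn : n ≠ 0 := by
    rintro rfl
    have hp0 : -p = 0 := eq_zero_of_mem_intPoints_of_norm_lt_one (neg_mem hp)
      (by simpa using hsmall.trans_le (min_le_right _ _))
    simp [neg_eq_zero.mp hp0, pi_norm_const, abs_of_pos hρ0] at hnp
  rcases hn.lt_or_gt with hneg | hpos
  · refine ⟨(-n).toNat, by omega, -p, neg_mem hp, ?_⟩
    rw [show (((-n).toNat : ℕ) : ℝ) = -n by exact_mod_cast Int.toNat_of_nonneg (by omega)]
    rw [neg_smul, ← norm_neg, neg_sub', neg_neg, neg_neg]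
    exact hsmall.trans_le (min_le_left _ _)
  · refine ⟨n.toNat, by omega, p, hp, ?_⟩
    rw [show ((n.toNat : ℕ) : ℝ) = n by exact_mod_cast Int.toNat_of_nonneg hpos.le]
    exact hsmall.trans_le (min_le_left _ _)

/-- **Kronecker's theorem**, with a positive multiplier. -/
theorem IntRelationFree.exists_nat_smul_sub_lt [DecidableEq ι] {z : ι → ℝ}
    (hz : IntRelationFree z) (a : ι → ℝ) {ε : ℝ} (hε : 0 < ε) :
    ∃ t : ℕ, 0 < t ∧ ∃ p ∈ intPoints ι, ‖(t : ℝ) • z - p - a‖ < ε := by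
  cases isEmpty_or_nonempty ι
  · exact ⟨1, one_pos, 0, zero_mem _, by simpa [Subsingleton.elim _ (0 : ι → ℝ)] using hε⟩
  obtain ⟨n₀, p₀, hp₀, h₀⟩ := hz.exists_int_smul_sub_lt a (half_pos hε)
  -- correct the sign of `n₀` by adding `j` times a small approximant with positive multiplier
  set j : ℕ := n₀.natAbs + 1
  have hj : (0 : ℝ) < j := by positivity
  obtain ⟨n₁, hn₁, p₁, hp₁, h₁⟩ := hz.exists_nat_smul_sub_lt_of_nonempty
    (show 0 < ε / 2 / j by positivity)
  have ht : 0 < n₀ + j * n₁ := by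
    have h1 : (j : ℤ) ≤ j * n₁ := le_mul_of_one_le_right (by positivity) (by exact_mod_cast hn₁)
    have h2 : (j : ℤ) = |n₀| + 1 := by simp [j]
    linarith [neg_abs_le n₀]
  refine ⟨(n₀ + j * n₁).toNat, by omega, p₀ + (j : ℝ) • p₁,
    add_mem hp₀ (by rw [Nat.cast_smul_eq_nsmul]; exact nsmul_mem hp₁ j), ?_⟩
  rw [show (((n₀ + j * n₁).toNat : ℕ) : ℝ) = n₀ + j * n₁ by
    exact_mod_cast Int.toNat_of_nonneg ht.le]
  calc ‖((n₀ : ℝ) + j * n₁) • z - (p₀ + (j : ℝ) • p₁) - a‖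
      = ‖((n₀ : ℝ) • z - p₀ - a) + (j : ℝ) • ((n₁ : ℝ) • z - p₁)‖ := by
        congr 1; simp only [add_smul, mul_smul, smul_sub]; abel
    _ ≤ ‖(n₀ : ℝ) • z - p₀ - a‖ + j * ‖(n₁ : ℝ) • z - p₁‖ := by
        grw [norm_add_le, norm_smul, Real.norm_natCast]
    _ < ε / 2 + j * (ε / 2 / j) := by gcongr
    _ = ε := by field_simp; ring

end Kronecker

section Simplex

variable {ι : Type*} [Fintype ι] [DecidableEq ι]

def centeredSimplexVertex (ι : Type*) [DecidableEq ι] : Option ι → ι → ℝ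
  | none => -1
  | some i => Pi.single i 1

theorem norm_centeredSimplexVertex_le (j : Option ι) : ‖centeredSimplexVertex ι j‖ ≤ 1 := by
  refine (pi_norm_le_iff_of_nonneg zero_le_one).mpr fun i => ?_
  cases j with
  | none => simp [centeredSimplexVertex]
  | some i' => by_cases h : i = i' <;> simp [centeredSimplexVertex, h]

theorem sum_smul_centeredSimplexVertex (μ : Option ι → ℝ) :
    ∑ j, μ j • centeredSimplexVertex ι j = fun i => μ (some i) - μ none := by
  ext i
  simp [Fintype.sum_option, centeredSimplexVertex, Finset.sum_apply, Pi.single_apply]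
  ring

theorem exists_pos_sum_smul_eq_zero (v : Option ι → ι → ℝ)
    (hv : ∀ j, ‖v j - centeredSimplexVertex ι j‖ ≤ 1 / (4 * (Fintype.card ι + 1))) :
    ∃ μ : Option ι → ℝ, (∀ j, 0 < μ j) ∧ ∑ j, μ j • v j = 0 := by
  set δ₀ : ℝ := 1 / (4 * (Fintype.card ι + 1))
  have hdep : ¬ LinearIndependent ℝ v := fun h => by
    simpa using h.fintype_card_le_finrank
  obtain ⟨g, hg, j₁, hj₁⟩ := Fintype.not_linearIndependent_iff.mp hdep
  obtain ⟨j₂, -, hj₂⟩ := Finset.univ.exists_max_image (fun j => |g j|) ⟨j₁, Finset.mem_univ _⟩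
  set m := |g j₂|
  have hm : 0 < m := (abs_pos.mpr hj₁).trans_le (hj₂ j₁ (Finset.mem_univ _))
  -- rescale the dependency so that its largest coefficient is `m > 0`
  set μ : Option ι → ℝ := fun j => g j₂ / m * g j
  have hμm : μ j₂ = m := by
    rw [show μ j₂ = g j₂ ^ 2 / m by ring, ← sq_abs, sq, mul_self_div_self]
  have hμle : ∀ j, |μ j| ≤ m := fun j => by
    rw [abs_mul, abs_div, abs_of_pos hm, div_self hm.ne', one_mul]
    exact hj₂ j (Finset.mem_univ _)
  have hμv : ∑ j, μ j • v j = 0 := by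
    simp only [μ, mul_smul, ← Finset.smul_sum, hg, smul_zero]
  -- the coefficients differ from those of the exact simplex relation by at most `m / 4`
  have hdiff : ∀ i, |μ (some i) - μ none| ≤ m / 4 := fun i => by
    set w := ∑ j, μ j • (v j - centeredSimplexVertex ι j)
    have hw : w = -fun i => μ (some i) - μ none := by
      simp only [w, smul_sub, Finset.sum_sub_distrib, hμv, sum_smul_centeredSimplexVertex, zero_sub]
    have hwle : ‖w‖ ≤ m / 4 := by
      calc ‖w‖ ≤ ∑ j, ‖μ j • (v j - centeredSimplexVertex ι j)‖ := norm_sum_le _ _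
        _ ≤ ∑ _j : Option ι, m * δ₀ := Finset.sum_le_sum fun j _ => by
            rw [norm_smul, Real.norm_eq_abs]
            exact mul_le_mul (hμle j) (hv j) (norm_nonneg _) hm.le
        _ = m / 4 := by
            simp only [Finset.sum_const, Finset.card_univ, Fintype.card_option, nsmul_eq_mul, δ₀]
            push_cast
            field_simp
    simpa [hw, abs_sub_comm] using (norm_le_pi_norm w i).trans hwle
  have hnone : 3 * m / 4 ≤ μ none := by
    cases j₂ with
    | none => linarith [hμm]
    | some i₀ => linarith [(abs_le.mp (hdiff i₀)).2, hμm]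
  refine ⟨μ, fun j => ?_, hμv⟩
  cases j with
  | none => linarith
  | some i => linarith [(abs_le.mp (hdiff i)).1]

end Simplex

theorem mem_convexHull_of_sum_smul_sub_eq_zero {E κ : Type*} [AddCommGroup E] [Module ℝ E]
    [Fintype κ] [Nonempty κ] {z : E} {p : κ → E} {t μ : κ → ℝ} (ht : ∀ j, 0 < t j)
    (hμ : ∀ j, 0 < μ j) (h : ∑ j, μ j • (t j • z - p j) = 0) :
    z ∈ convexHull ℝ (range fun j => (t j)⁻¹ • p j) := by
  set S := ∑ j, μ j * t j
  have hS : 0 < S := Finset.sum_pos (fun j _ => mul_pos (hμ j) (ht j)) Finset.univ_nonempty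
  have hp : ∑ j, μ j • p j = S • z := by
    simp only [smul_sub, smul_smul, Finset.sum_sub_distrib, sub_eq_zero] at h
    rw [← h, Finset.sum_smul]
  refine mem_convexHull_of_exists_fintype (fun j => μ j * t j / S) (fun j => (t j)⁻¹ • p j)
    (fun j => by have := hμ j; have := ht j; positivity) ?_ (fun j => mem_range_self j) ?_
  · rw [← Finset.sum_div, div_self hS.ne']
  · calc ∑ j, (μ j * t j / S) • (t j)⁻¹ • p j = S⁻¹ • ∑ j, μ j • p j := by
          rw [Finset.smul_sum]
          refine Finset.sum_congr rfl fun j _ => ?_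
          rw [smul_smul, smul_smul]
          field_simp [(ht j).ne']
      _ = z := by rw [hp, smul_smul, inv_mul_cancel₀ hS.ne', one_smul]

section Approximants

variable {ι : Type*} [Fintype ι]

def approximants (x : ι → ℝ) (δ : ℝ) : Set (ι → ℝ) :=
  {q | ∃ T : ℕ, 0 < T ∧ (T : ℝ) • q ∈ intPoints ι ∧ ‖x - q‖ < δ / T}

theorem approximants_mono (x : ι → ℝ) {δ δ' : ℝ} (h : δ ≤ δ') :
    approximants x δ ⊆ approximants x δ' := fun _ ⟨T, hT, hTq, hq⟩ =>
  ⟨T, hT, hTq, hq.trans_le (div_le_div_of_nonneg_right h (Nat.cast_nonneg T))⟩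

theorem IntRelationFree.mem_convexHull_approximants [DecidableEq ι] {z : ι → ℝ}
    (hz : IntRelationFree z) {δ : ℝ} (hδ : 0 < δ) : z ∈ convexHull ℝ (approximants z δ) := by
  set η := δ / 2 with hηδ
  set δ₀ : ℝ := 1 / (4 * (Fintype.card ι + 1))
  have hη : 0 < η := half_pos hδ
  have hδ₀ : δ₀ ≤ 1 := by
    rw [div_le_one (by positivity)]
    linarith [(Fintype.card ι).cast_nonneg (α := ℝ)]
  -- Kronecker: `t j • z - p j` points in the direction of the `j`-th vertex, up to `η δ₀`
  choose t ht p hp hclose using fun j =>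
    hz.exists_nat_smul_sub_lt (η • centeredSimplexVertex ι j) (show 0 < η * δ₀ by positivity)
  have htR : ∀ j, (0 : ℝ) < t j := fun j => by exact_mod_cast ht j
  obtain ⟨μ, hμ, hμv⟩ := exists_pos_sum_smul_eq_zero (fun j => η⁻¹ • ((t j : ℝ) • z - p j))
    fun j => by
      rw [show η⁻¹ • ((t j : ℝ) • z - p j) - centeredSimplexVertex ι j =
          η⁻¹ • ((t j : ℝ) • z - p j - η • centeredSimplexVertex ι j) by
        rw [smul_sub _ _ (η • _), smul_smul, inv_mul_cancel₀ hη.ne', one_smul],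
        norm_smul, Real.norm_of_nonneg (inv_nonneg.mpr hη.le)]
      calc η⁻¹ * ‖(t j : ℝ) • z - p j - η • centeredSimplexVertex ι j‖
          ≤ η⁻¹ * (η * δ₀) := by gcongr; exact (hclose j).le
        _ = δ₀ := by field_simp
  have hrel : ∑ j, μ j • ((t j : ℝ) • z - p j) = 0 := by
    simp_rw [smul_comm (μ _) η⁻¹] at hμv
    rw [← Finset.smul_sum, smul_eq_zero] at hμv
    exact hμv.resolve_left (inv_ne_zero hη.ne')
  refine convexHull_mono ?_ (mem_convexHull_of_sum_smul_sub_eq_zero htR hμ hrel)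
  rintro _ ⟨j, rfl⟩
  refine ⟨t j, ht j, by rw [smul_inv_smul₀ (htR j).ne']; exact hp j, ?_⟩
  rw [lt_div_iff₀ (htR j)]
  calc ‖z - (t j : ℝ)⁻¹ • p j‖ * t j = ‖(t j : ℝ) • (z - (t j : ℝ)⁻¹ • p j)‖ := by
        rw [norm_smul, Real.norm_of_nonneg (htR j).le, mul_comm]
    _ = ‖(t j : ℝ) • z - p j‖ := by rw [smul_sub, smul_inv_smul₀ (htR j).ne']
    _ ≤ ‖(t j : ℝ) • z - p j - η • centeredSimplexVertex ι j‖ +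
          ‖η • centeredSimplexVertex ι j‖ := norm_le_norm_sub_add _ _
    _ < η * δ₀ + η * 1 := by
        rw [norm_smul, Real.norm_of_nonneg hη.le]
        exact add_lt_add_of_lt_of_le (hclose j)
          (mul_le_mul_of_nonneg_left (norm_centeredSimplexVertex_le j) hη.le)
    _ ≤ δ := by linarith [mul_le_mul_of_nonneg_left hδ₀ hη.le]

end Approximants

section RationalAffineMaps

variable {ι κ : Type*} [Fintype κ]

def ratAffineMap (c : ι → ℚ) (A : Matrix ι κ ℚ) : (κ → ℝ) →ᵃ[ℝ] (ι → ℝ) :=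
  (A.map ((↑) : ℚ → ℝ)).mulVecLin.toAffineMap + AffineMap.const ℝ (κ → ℝ) fun i => (c i : ℝ)

theorem ratAffineMap_apply (c : ι → ℚ) (A : Matrix ι κ ℚ) (y : κ → ℝ) (i : ι) :
    ratAffineMap c A y i = ∑ k, (A i k : ℝ) * y k + c i := by
  simp [ratAffineMap, Matrix.mulVec, dotProduct]

theorem exists_nat_mul_eq_int {α : Type*} [Fintype α] (f : α → ℚ) :
    ∃ M : ℕ, 0 < M ∧ ∀ a, ∃ n : ℤ, (M : ℝ) * f a = n := by
  classical
  refine ⟨∏ a, (f a).den, Finset.prod_pos fun a _ => (f a).den_pos, fun a => ?_⟩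
  obtain ⟨k, hk⟩ := Finset.dvd_prod_of_mem (fun a => (f a).den) (Finset.mem_univ a)
  have hnum : (f a : ℝ) * (f a).den = (f a).num := by exact_mod_cast Rat.mul_den_eq_num (f a)
  refine ⟨k * (f a).num, ?_⟩
  rw [hk]
  push_cast
  linear_combination (k : ℝ) * hnum

theorem exists_image_ratAffineMap_approximants_subset [Fintype ι] (c : ι → ℚ)
    (A : Matrix ι κ ℚ) : ∃ R > 0, ∀ y δ,
      ratAffineMap c A '' approximants y δ ⊆ approximants (ratAffineMap c A y) (R * δ) := by
  obtain ⟨M₁, hM₁, hc⟩ := exists_nat_mul_eq_int c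
  obtain ⟨M₂, hM₂, hA⟩ := exists_nat_mul_eq_int fun ik : ι × κ => A ik.1 ik.2
  obtain ⟨K, hK, hKA⟩ := (LinearMap.toContinuousLinearMap (A.map ((↑) : ℚ → ℝ)).mulVecLin).bound
  refine ⟨M₁ * M₂ * K, by positivity, ?_⟩
  rintro y δ _ ⟨q, ⟨T, hT, hTq, hq⟩, rfl⟩
  refine ⟨M₁ * M₂ * T, by positivity, mem_intPoints.mpr fun i => ?_, ?_⟩
  · choose a ha using hA
    choose b hb using mem_intPoints.mp hTq
    obtain ⟨n, hn⟩ := hc i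
    refine ⟨M₁ * ∑ k, a (i, k) * b k + M₂ * T * n, ?_⟩
    simp only [Pi.smul_apply, smul_eq_mul, ratAffineMap_apply] at hb ⊢
    push_cast
    simp only [← hn, ← ha, hb, mul_add, Finset.mul_sum]
    congr 1
    · exact Finset.sum_congr rfl fun k _ => by ring
    · ring
  · calc ‖ratAffineMap c A y - ratAffineMap c A q‖ = ‖(A.map ((↑) : ℚ → ℝ)).mulVec (y - q)‖ := by
          simp [ratAffineMap, Matrix.mulVec_sub]
      _ ≤ K * ‖y - q‖ := hKA (y - q)
      _ < K * (δ / T) := by gcongr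
      _ = M₁ * M₂ * K * δ / ↑(M₁ * M₂ * T) := by push_cast; field_simp

end RationalAffineMaps

theorem exists_intRelationFree_ratAffineMap_eq {ι : Type*} [Fintype ι] (s : ι → ℝ) :
    ∃ (κ : Type) (_ : Fintype κ) (z : κ → ℝ) (c : ι → ℚ) (A : Matrix ι κ ℚ),
      IntRelationFree z ∧ ratAffineMap c A z = s := by
  classical
  -- a `ℚ`-basis of `span ℚ {1, s₁, …, sₙ}` containing `1`
  let V := span ℚ (insert (1 : ℝ) (range s))
  have : FiniteDimensional ℚ V := FiniteDimensional.span_of_finite ℚ ((finite_range s).insert 1)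
  let one : V := ⟨1, subset_span (mem_insert _ _)⟩
  have hone : LinearIndepOn ℚ id {one} :=
    (linearIndepOn_singleton_iff ℚ).mpr fun h => one_ne_zero congr(Subtype.val $h)
  let B := Basis.extend hone
  have := FiniteDimensional.fintypeBasisIndex B
  let i₀ : hone.extend (subset_univ _) := ⟨one, hone.subset_extend _ rfl⟩
  have hB₀ : B i₀ = one := Basis.extend_apply_self hone i₀
  have hcoe : ∀ g : hone.extend (subset_univ _) → ℚ,
      ((∑ j, g j • B j : V) : ℝ) = g i₀ + ∑ k : {j // j ≠ i₀}, g k * (B k : ℝ) := fun g => by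
    rw [Submodule.coe_sum, Fintype.sum_eq_add_sum_subtype_ne _ i₀, hB₀]
    simp [Rat.smul_def, one]
  have hs : ∀ i, s i ∈ V := fun i => subset_span (mem_insert_of_mem _ (mem_range_self i))
  refine ⟨{j // j ≠ i₀}, inferInstance, fun k => B k, fun i => B.repr ⟨s i, hs i⟩ i₀,
    .of fun i k => B.repr ⟨s i, hs i⟩ k, fun m n hmn => ?_, ?_⟩
  · let g : hone.extend (subset_univ _) → ℚ := fun j => if h : j = i₀ then -n else m ⟨j, h⟩
    have hgk : ∀ k : {j // j ≠ i₀}, g k = m k := fun k => dif_neg k.2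
    have hg : ∑ j, g j • B j = 0 := by
      rw [← Submodule.coe_eq_zero, hcoe, show g i₀ = -n from dif_pos rfl]
      simp [hgk, ← hmn]
    ext k
    simpa [hgk] using Fintype.linearIndependent_iff.mp B.linearIndependent g hg k
  · ext i
    rw [ratAffineMap_apply, add_comm]
    simpa using (hcoe (B.repr ⟨s i, hs i⟩)).symm.trans (congrArg Subtype.val (B.sum_repr _))

theorem mem_convexHull_approximants {ι : Type*} [Fintype ι] (s : ι → ℝ) {δ : ℝ} (hδ : 0 < δ) :
    s ∈ convexHull ℝ (approximants s δ) := by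
  classical
  obtain ⟨κ, _, z, c, A, hz, rfl⟩ := exists_intRelationFree_ratAffineMap_eq s
  obtain ⟨R, hR, hsub⟩ := exists_image_ratAffineMap_approximants_subset c A
  have h := mem_image_of_mem (ratAffineMap c A) (hz.mem_convexHull_approximants (div_pos hδ hR))
  rw [AffineMap.image_convexHull] at h
  exact convexHull_mono ((hsub z (δ / R)).trans_eq (by rw [mul_div_cancel₀ _ hR.ne'])) h

theorem approximants_subset_stdSimplex {ι : Type*} [Fintype ι] {s : ι → ℝ} {δ : ℝ}
    (hs : ∀ i, δ ≤ s i) (hsum : ∑ i, s i = 1) : approximants s δ ⊆ stdSimplex ℝ ι := by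
  rintro q ⟨T, hT, hTq, hq⟩
  have hTR : (0 : ℝ) < T := by exact_mod_cast hT
  have hδ : 0 < δ := (div_pos_iff_of_pos_right hTR).mp ((norm_nonneg _).trans_lt hq)
  have hcoord : ∀ i, |s i - q i| < δ := fun i =>
    (norm_le_pi_norm (s - q) i).trans_lt (hq.trans_le (div_le_self hδ.le (by exact_mod_cast hT)))
  refine ⟨fun i => by linarith [(abs_lt.mp (hcoord i)).2, hs i], ?_⟩
  -- `T (1 - ∑ q)` is an integer of absolute value `< T · card ι · δ / T ≤ ∑ s = 1`
  choose b hb using mem_intPoints.mp hTq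
  have hcard : Fintype.card ι * δ ≤ 1 := by
    simpa [← hsum] using Finset.sum_le_sum fun i (_ : i ∈ Finset.univ) => hs i
  have hbq : ∑ i, (b i : ℝ) = T * ∑ i, q i := by simp [hb, Finset.mul_sum]
  have hlt : |((T - ∑ i, b i : ℤ) : ℝ)| < 1 := by
    push_cast
    rw [hbq]
    calc |(T : ℝ) - T * ∑ i, q i| = T * |∑ i, (s i - q i)| := by
          rw [Finset.sum_sub_distrib, hsum, ← abs_of_pos hTR, ← abs_mul, abs_of_pos hTR, mul_sub,
            mul_one]
      _ ≤ T * ∑ i, |s i - q i| := by gcongr; exact Finset.abs_sum_le_sum_abs _ _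
      _ ≤ T * ∑ _i : ι, ‖s - q‖ := by gcongr with i; exact norm_le_pi_norm (s - q) i
      _ = Fintype.card ι * (T * ‖s - q‖) := by simp; ring
      _ < Fintype.card ι * δ := by
          have : Nonempty ι := by
            by_contra h
            simp [not_nonempty_iff.mp h] at hsum
          gcongr
          rwa [lt_div_iff₀' hTR] at hq
      _ ≤ 1 := hcard
  have hm : (T : ℤ) - ∑ i, b i = 0 := Int.abs_lt_one_iff.mp (by exact_mod_cast hlt)
  have hm' : ((T - ∑ i, b i : ℤ) : ℝ) = 0 := by exact_mod_cast hm
  push_cast at hm'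
  rw [hbq] at hm'
  exact (mul_right_inj' hTR.ne').mp (by linarith)

theorem IsRatPolytope.mem_convexHull_inter_approximants {N : ℕ} {P : Set (Fin N → ℝ)}
    (hP : IsRatPolytope P) {x : Fin N → ℝ} (hx : x ∈ P) {δ : ℝ} (hδ : 0 < δ) :
    x ∈ convexHull ℝ (P ∩ approximants x δ) := by
  obtain ⟨S, hS, rfl⟩ := hP
  -- barycentric coordinates `w > 0` of `x` with respect to rational vertices `v`
  obtain ⟨ι, _, v, w, hvS, -, hw0, hw1, hwx⟩ := eq_pos_convex_span_of_mem_convexHull hx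
  choose ρ hρ using fun i j => hS (v i) (hvS ⟨i, rfl⟩) j
  let A : Matrix (Fin N) ι ℚ := .of fun j i => ρ i j
  have hA : ∀ σ, ratAffineMap 0 A σ = ∑ i, σ i • v i := fun σ => by
    ext j
    simp [ratAffineMap_apply, A, hρ, Finset.sum_apply, mul_comm]
  obtain ⟨R, hR, hsub⟩ := exists_image_ratAffineMap_approximants_subset 0 A
  have hsmall : ∀ᶠ δ' in 𝓝 (0 : ℝ), (∀ i, δ' ≤ w i) ∧ δ' ≤ δ / R :=
    (eventually_all.mpr fun i => eventually_le_nhds (hw0 i)).and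
      (eventually_le_nhds (div_pos hδ hR))
  obtain ⟨δ', ⟨hδ'w, hδ'R⟩, hδ'⟩ :=
    ((hsmall.filter_mono nhdsWithin_le_nhds).and (self_mem_nhdsWithin (s := Ioi 0))).exists
  have hw := mem_image_of_mem (ratAffineMap 0 A) (mem_convexHull_approximants w hδ')
  rw [AffineMap.image_convexHull, hA, hwx] at hw
  refine convexHull_mono ?_ hw
  rintro _ ⟨σ, hσ, rfl⟩
  obtain ⟨hσ0, hσ1⟩ := approximants_subset_stdSimplex hδ'w hw1 hσ
  refine ⟨?_, ?_⟩
  · rw [hA]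
    exact mem_convexHull_of_exists_fintype σ v hσ0 hσ1 (fun i => hvS ⟨i, rfl⟩) rfl
  · refine approximants_mono _ ?_ (hwx ▸ hA w ▸ hsub w δ' ⟨σ, hσ, rfl⟩)
    rwa [le_div_iff₀' hR] at hδ'R

/-- Diophantine approximation (Lemma 2.11).  Let `P ⊆ ℝ^N` be a rational polytope,
`x ∈ P`, `k` a positive integer and `ε > 0`.  Then there are finitely many points
`xs i ∈ P` and positive integers `ks i` divisible by `k` such that `(ks i / k) • xs i`
is integral, `‖x - xs i‖ < ε / ks i`, and `x` is a convex linear combination of the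
`xs i`. -/
theorem diophantine_approximation {N : ℕ} (P : Set (Fin N → ℝ)) (hP : IsRatPolytope P)
    (x : Fin N → ℝ) (hx : x ∈ P) (k : ℕ) (hk : 0 < k) (ε : ℝ) (hε : 0 < ε) :
    ∃ (m : ℕ) (xs : Fin m → Fin N → ℝ) (ks : Fin m → ℕ) (t : Fin m → ℝ),
      (∀ i, xs i ∈ P) ∧
      (∀ i, 0 < ks i ∧ k ∣ ks i) ∧
      (∀ i j, ∃ z : ℤ, ((ks i : ℝ) / (k : ℝ)) * xs i j = (z : ℝ)) ∧
      (∀ i, ‖x - xs i‖ < ε / (ks i : ℝ)) ∧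
      (∀ i, 0 ≤ t i) ∧ (∑ i, t i = 1) ∧ x = ∑ i, t i • xs i := by
  have hkR : (0 : ℝ) < k := by exact_mod_cast hk
  obtain ⟨ι, _, t, y, ht0, ht1, hy, hyx⟩ := mem_convexHull_iff_exists_fintype.mp
    (hP.mem_convexHull_inter_approximants hx (div_pos hε hkR))
  choose T hT hTy hyT using fun i => (hy i).2
  let e := (Fintype.equivFin ι).symm
  refine ⟨Fintype.card ι, y ∘ e, fun j => k * T (e j), t ∘ e, fun j => (hy _).1,
    fun j => ⟨Nat.mul_pos hk (hT _), dvd_mul_right _ _⟩, fun j l => ?_, fun j => ?_,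
    fun j => ht0 _, (e.sum_comp t).trans ht1, ((e.sum_comp _).trans hyx).symm⟩
  · obtain ⟨n, hn⟩ := mem_intPoints.mp (hTy (e j)) l
    exact ⟨n, by simp [hn, hkR.ne']⟩
  · simpa [div_div] using hyT (e j)
end ClosedSubgroup
end

section
/- Let S ⊆ Z^r be a finitely generated monoid, R = ⊕_{s∈S} R_s an S-graded ring, and S' ⊆ S a finitely generated submonoid. If R is a finitely generated R_0-algebra, then the Veronese subring R' = ⊕_{s∈S'} R_s is a finitely generated R_0-algebra. -/
/-!
Pick finitely many homogeneous generators `xᵢ ∈ R_{dᵢ}` of `R` over `R₀`. Then `R` is spanned over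
`R₀` by the monomials `x ^ a`, `a ∈ ℕ^ι`, and projecting to degree `s` shows that `R_s` is spanned
by the monomials of weight `∑ aᵢ • dᵢ = s`. The exponents of weight in `S'` form a finitely
generated monoid: with `e₁, …, e_m` generators of `S'`, it is the projection of the monoid of
solutions `(a, c) ∈ ℕ^ι × ℕ^m` of `∑ aᵢ • dᵢ = ∑ cⱼ • eⱼ`, which is finitely generated by
Gordan's lemma. The monomials of a finite generating set of that monoid generate `R'` over `R₀`.
-/

open Set

theorem AddSubmonoid.FG.comap_fintypeLinearCombination {G κ : Type*} [AddCommMonoid G]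
    [IsCancelAdd G] [Fintype κ] {S : AddSubmonoid G} (hS : S.FG) (d : κ → G) :
    (S.comap (Fintype.linearCombination ℕ d)).FG := by
  classical
  obtain ⟨F, rfl⟩ := hS
  have hcomap : (AddSubmonoid.closure (F : Set G)).comap (Fintype.linearCombination ℕ d) =
      AddSubmonoid.map (AddMonoidHom.fst _ _)
        (((Fintype.linearCombination ℕ d).toAddMonoidHom.comp (AddMonoidHom.fst _ _)).eqLocusM
          ((Fintype.linearCombination ℕ (Subtype.val : F → G)).toAddMonoidHom.comp
            (AddMonoidHom.snd _ _))) := by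
    ext a
    simp [AddSubmonoid.mem_closure_finset', Fintype.linearCombination_apply]
  rw [hcomap]
  exact (AddSubmonoid.fg_eqLocusM _ _).map _

section Monomials

variable {A R κ : Type*} [CommSemiring A] [CommSemiring R] [Algebra A R] [Fintype κ]

theorem Submodule.span_range_prod_pow_eq_top {x : κ → R} (hx : Algebra.adjoin A (range x) = ⊤) :
    Submodule.span A (range fun a : κ → ℕ ↦ ∏ i, x i ^ a i) = ⊤ := by
  rw [← Algebra.top_toSubmodule (R := A), ← hx, Algebra.adjoin_eq_span]
  congr
  ext y
  simp [Submonoid.mem_closure_range_iff_of_fintype, eq_comm]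

theorem prod_pow_mem_adjoin_image (x : κ → R) {G : Set (κ → ℕ)} {a : κ → ℕ}
    (ha : a ∈ AddSubmonoid.closure G) :
    ∏ i, x i ^ a i ∈ Algebra.adjoin A ((fun b : κ → ℕ ↦ ∏ i, x i ^ b i) '' G) := by
  induction ha using AddSubmonoid.closure_induction with
  | mem b hb => exact Algebra.subset_adjoin (mem_image_of_mem _ hb)
  | zero => simp
  | add b c _ _ hb hc =>
    simpa only [Pi.add_apply, pow_add, Finset.prod_mul_distrib] using mul_mem hb hc

end Monomials

section GradedMonoid

variable {R ι σ : Type*} [CommRing R] [AddCommMonoid ι] [SetLike σ R] [AddSubgroupClass σ R]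
  (𝒜 : ι → σ) [SetLike.GradedMonoid 𝒜]

theorem toSubring_adjoin_gradeZero (T : Set R) :
    (Algebra.adjoin (𝒜 0) T).toSubring = Subring.closure ((𝒜 0 : Set R) ∪ T) := by
  rw [Algebra.adjoin_eq_ring_closure]
  congr
  exact Subtype.range_coe

def veroneseSubmonoid (S : AddSubmonoid ι) : Submonoid R where
  carrier := ⋃ s ∈ (S : Set ι), (𝒜 s : Set R)
  one_mem' := mem_biUnion S.zero_mem (SetLike.one_mem_graded 𝒜)
  mul_mem' {x y} hx hy := by
    obtain ⟨s, hs, hxs⟩ := mem_iUnion₂.mp hx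
    obtain ⟨t, ht, hyt⟩ := mem_iUnion₂.mp hy
    exact mem_biUnion (S.add_mem hs ht) (SetLike.mul_mem_graded hxs hyt)

def veronese (S : AddSubmonoid ι) : Subalgebra (𝒜 0) R :=
  Algebra.adjoin (𝒜 0) (veroneseSubmonoid 𝒜 S)

theorem coe_veronese (S : AddSubmonoid ι) :
    (veronese 𝒜 S : Set R) = AddSubgroup.closure (⋃ s ∈ (S : Set ι), (𝒜 s : Set R)) := by
  have hzero : (𝒜 0 : Set R) ⊆ veroneseSubmonoid 𝒜 S :=
    subset_biUnion_of_mem (u := fun s ↦ (𝒜 s : Set R)) S.zero_mem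
  ext y
  rw [SetLike.mem_coe, SetLike.mem_coe, ← Subalgebra.mem_toSubring, veronese,
    toSubring_adjoin_gradeZero, union_eq_right.mpr hzero, Subring.mem_closure_iff,
    Submonoid.closure_eq]
  rfl

end GradedMonoid

section GradedRing

variable {R ι σ : Type*} [CommRing R] [AddCommMonoid ι] [DecidableEq ι] [SetLike σ R]
  [AddSubgroupClass σ R] (𝒜 : ι → σ) [GradedRing 𝒜]

theorem mem_span_image_of_span_range_eq_top {α : Type*} {v : α → R} {deg : α → ι}
    (hv : ∀ j, v j ∈ 𝒜 (deg j)) (hspan : Submodule.span (𝒜 0) (range v) = ⊤) {s : ι} {y : R}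
    (hy : y ∈ 𝒜 s) : y ∈ Submodule.span (𝒜 0) (v '' {j | deg j = s}) := by
  suffices h : ∀ z ∈ Submodule.span (𝒜 0) (range v),
      (DirectSum.decompose 𝒜 z s : R) ∈ Submodule.span (𝒜 0) (v '' {j | deg j = s}) by
    simpa only [DirectSum.decompose_of_mem_same 𝒜 hy] using h y (hspan ▸ Submodule.mem_top)
  intro z hz
  induction hz using Submodule.span_induction with
  | mem _ h =>
    obtain ⟨j, rfl⟩ := h
    by_cases hj : deg j = s
    · rw [DirectSum.decompose_of_mem_same 𝒜 (hj ▸ hv j)]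
      exact Submodule.subset_span ⟨j, hj, rfl⟩
    · rw [DirectSum.decompose_of_mem_ne 𝒜 (hv j) hj]
      exact zero_mem _
  | zero => simp
  | add _ _ _ _ h₁ h₂ => simpa using add_mem h₁ h₂
  | smul a _ _ h =>
    rw [Algebra.smul_def, SetLike.GradeZero.algebraMap_apply,
      DirectSum.coe_decompose_mul_of_left_mem_zero 𝒜 a.2]
    exact Submodule.smul_mem _ a h

theorem veronese_fg [IsCancelAdd ι] [Algebra.FiniteType (𝒜 0) R] {S : AddSubmonoid ι}
    (hS : S.FG) : (veronese 𝒜 S).FG := by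
  classical
  obtain ⟨X, hX, hhom⟩ := GradedAlgebra.exists_finset_adjoin_eq_top_and_homogeneous 𝒜
  choose deg hdeg using hhom
  let d : X → ι := fun i ↦ deg i i.2
  let mono : (X → ℕ) → R := fun a ↦ ∏ i : X, (i : R) ^ a i
  have hmono (a : X → ℕ) : mono a ∈ 𝒜 (Fintype.linearCombination ℕ d a) :=
    SetLike.prod_pow_mem_graded 𝒜 d Subtype.val a fun i _ ↦ hdeg i i.2
  obtain ⟨G, hG⟩ := hS.comap_fintypeLinearCombination d
  refine ⟨G.image mono, le_antisymm ?_ ?_⟩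
  · rw [Algebra.adjoin_le_iff, Finset.coe_image]
    rintro _ ⟨a, ha, rfl⟩
    have ha' : a ∈ S.comap (Fintype.linearCombination ℕ d) := hG ▸ AddSubmonoid.subset_closure ha
    exact Algebra.subset_adjoin (mem_biUnion ha' (hmono a))
  · rw [veronese, Algebra.adjoin_le_iff]
    intro y hy
    obtain ⟨s, hs, hys⟩ := mem_iUnion₂.mp hy
    have hspan : Submodule.span (𝒜 0) (range mono) = ⊤ :=
      Submodule.span_range_prod_pow_eq_top (by simpa using hX)
    refine (Subalgebra.mem_toSubmodule _).mp <| Submodule.span_le.mpr ?_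
      (mem_span_image_of_span_range_eq_top 𝒜 hmono hspan hys)
    rintro _ ⟨a, rfl, rfl⟩
    rw [Finset.coe_image]
    exact prod_pow_mem_adjoin_image _ (hG ▸ hs)

end GradedRing

theorem veronese_finitely_generated_general (r : ℕ) (R : Type) [CommRing R]
    (𝒜 : (Fin r → ℤ) → AddSubgroup R) [GradedRing 𝒜]
    (S' : AddSubmonoid (Fin r → ℤ)) (hS' : S'.FG)
    (hfg : ∃ T : Finset R, Subring.closure ((𝒜 0 : Set R) ∪ (T : Set R)) = ⊤) :
    ∃ T : Finset R,
      (T : Set R) ⊆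
        (AddSubgroup.closure (⋃ s ∈ (S' : Set (Fin r → ℤ)), (𝒜 s : Set R)) : Set R) ∧
      (Subring.closure ((𝒜 0 : Set R) ∪ (T : Set R)) : Set R) =
        (AddSubgroup.closure (⋃ s ∈ (S' : Set (Fin r → ℤ)), (𝒜 s : Set R)) : Set R) := by
  obtain ⟨T, hT⟩ := hfg
  have : Algebra.FiniteType (𝒜 0) R :=
    ⟨⟨T, Subalgebra.toSubring_injective (by rw [toSubring_adjoin_gradeZero, hT]; rfl)⟩⟩
  obtain ⟨T', hT'⟩ := veronese_fg 𝒜 hS'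
  refine ⟨T', ?_, ?_⟩
  · rw [← coe_veronese, ← hT']
    exact Algebra.subset_adjoin
  · rw [← coe_veronese, ← hT', ← toSubring_adjoin_gradeZero]
    rfl

/-- Lemma 2.25(i).  Let `S ⊆ ℤ^r` be a finitely generated monoid, `R = ⊕_{s ∈ S} R_s`
an `S`-graded ring (graded by `ℤ^r` with all pieces of degrees outside `S` zero), and
`S' ⊆ S` a finitely generated submonoid.  If `R` is a finitely generated `R₀`-algebra,
then the Veronese subring `R' = ⊕_{s ∈ S'} R_s` is a finitely generated `R₀`-algebra.
Finite generation over `R₀ = 𝒜 0` is expressed as: the subring generated by `𝒜 0` and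
finitely many elements equals the ring in question (the Veronese subring being the
additive subgroup generated by the pieces `𝒜 s`, `s ∈ S'`). -/
theorem veronese_finitely_generated (r : ℕ) (R : Type) [CommRing R]
    (𝒜 : (Fin r → ℤ) → AddSubgroup R) [GradedRing 𝒜]
    (S S' : AddSubmonoid (Fin r → ℤ)) (hS : S.FG) (hS' : S'.FG) (hsub : S' ≤ S)
    (hsupp : ∀ s, s ∉ S → 𝒜 s = ⊥)
    (hfg : ∃ T : Finset R, Subring.closure ((𝒜 0 : Set R) ∪ (T : Set R)) = ⊤) :
    ∃ T : Finset R,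
      (T : Set R) ⊆
        (AddSubgroup.closure (⋃ s ∈ (S' : Set (Fin r → ℤ)), (𝒜 s : Set R)) : Set R) ∧
      (Subring.closure ((𝒜 0 : Set R) ∪ (T : Set R)) : Set R) =
        (AddSubgroup.closure (⋃ s ∈ (S' : Set (Fin r → ℤ)), (𝒜 s : Set R)) : Set R) :=
  veronese_finitely_generated_general r R 𝒜 S' hS' hfg
end

section
/- Let C ⊆ R^N be a compact convex set, and suppose C has infinitely many extreme points. Then there exists a sequence of distinct extreme points x_n of C converging to a point x ∈ C, and for every δ > 0 there exists a point x' ∉ C with 0 < ‖x − x'‖ < δ such that the open segment (x, x') meets C. -/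
open Set Filter Topology

/-!
Pick infinitely many distinct extreme points; by compactness a subsequence converges to some
`x ∈ C`, and since the terms are distinct, infinitely many of them differ from `x`. For such an
extreme point `e` close to `x`, the reflection `x' = e + (e - x)` of `x` through `e` does the job:
`e` is the midpoint of `x` and `x'`, so `x' ∈ C` would contradict extremality of `e`, while
`‖x - x'‖ = 2 ‖x - e‖` is small.
-/

theorem IsCompact.exists_injective_tendsto_of_infinite {X : Type*} [TopologicalSpace X]
    [FirstCountableTopology X] {K S : Set X} (hK : IsCompact K) (hSK : S ⊆ K) (hS : S.Infinite) :
    ∃ x ∈ K, ∃ u : ℕ → X, Function.Injective u ∧ (∀ n, u n ∈ S) ∧ Tendsto u atTop (𝓝 x) := by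
  let v : ℕ → X := fun n => hS.natEmbedding _ n
  have hv_inj : Function.Injective v := Subtype.val_injective.comp (hS.natEmbedding _).injective
  obtain ⟨x, hxK, φ, hφ, hlim⟩ := hK.tendsto_subseq fun n => hSK (hS.natEmbedding _ n).2
  exact ⟨x, hxK, v ∘ φ, hv_inj.comp hφ.injective, fun n => (hS.natEmbedding _ (φ n)).2, hlim⟩

theorem Filter.Tendsto.nhdsNE_of_injective {X : Type*} [TopologicalSpace X] {u : ℕ → X} {x : X}
    (hu : Function.Injective u) (h : Tendsto u atTop (𝓝 x)) : Tendsto u atTop (𝓝[≠] x) := by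
  have hne : ∀ᶠ n in atTop, u n ∈ ({x}ᶜ : Set X) := by
    rw [← Nat.cofinite_eq_atTop]
    exact hu.tendsto_cofinite (finite_singleton x).compl_mem_cofinite
  exact tendsto_nhdsWithin_of_tendsto_nhds_of_eventually_within _ h hne

section Reflection

variable {𝕜 E : Type*} [Field 𝕜] [LinearOrder 𝕜] [IsStrictOrderedRing 𝕜] [AddCommGroup E]
  [Module 𝕜 E]

theorem mem_openSegment_self_add_sub (x e : E) : e ∈ openSegment 𝕜 x (e + (e - x)) := by
  simpa only [sub_sub_cancel] using mem_openSegment_sub_add (𝕜 := 𝕜) e (e - x)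

theorem add_sub_notMem_of_mem_extremePoints {C : Set E} {x e : E} (he : e ∈ extremePoints 𝕜 C)
    (hx : x ∈ C) (hne : x ≠ e) : e + (e - x) ∉ C := fun hx' =>
  hne (he.2 hx hx' (mem_openSegment_self_add_sub x e))

end Reflection

theorem accumulation_of_extreme_points_general {N : ℕ} (C : Set (Fin N → ℝ))
    (hCc : IsCompact C)
    (hinf : (Set.extremePoints ℝ C).Infinite) :
    ∃ (x : Fin N → ℝ) (u : ℕ → Fin N → ℝ),
      x ∈ C ∧ Function.Injective u ∧
      (∀ n, u n ∈ Set.extremePoints ℝ C) ∧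
      Tendsto u atTop (𝓝 x) ∧
      ∀ δ : ℝ, 0 < δ → ∃ x' : Fin N → ℝ, x' ∉ C ∧ 0 < ‖x - x'‖ ∧ ‖x - x'‖ < δ ∧
        (openSegment ℝ x x' ∩ C).Nonempty := by
  obtain ⟨x, hxC, u, hu_inj, hu_ext, hlim⟩ :=
    hCc.exists_injective_tendsto_of_infinite extremePoints_subset hinf
  refine ⟨x, u, hxC, hu_inj, hu_ext, hlim, fun δ hδ => ?_⟩
  obtain ⟨n, hne, hclose⟩ : ∃ n, u n ≠ x ∧ dist (u n) x < δ / 2 :=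
    ((hlim.nhdsNE_of_injective hu_inj).eventually_mem
      (inter_mem_nhdsWithin _ (Metric.ball_mem_nhds x (half_pos hδ)))).exists
  set e := u n
  have hnorm : ‖x - (e + (e - x))‖ = 2 * ‖x - e‖ := by
    rw [show x - (e + (e - x)) = (2 : ℝ) • (x - e) by module, norm_smul, Real.norm_two]
  have hpos : 0 < ‖x - e‖ := norm_pos_iff.2 (sub_ne_zero.2 hne.symm)
  refine ⟨e + (e - x), add_sub_notMem_of_mem_extremePoints (hu_ext n) hxC hne.symm,
    by rw [hnorm]; positivity, ?_,
    e, mem_openSegment_self_add_sub x e, extremePoints_subset (hu_ext n)⟩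
  rw [hnorm, ← dist_eq_norm, dist_comm]
  linarith

/-- If a compact convex set `C ⊆ ℝ^N` has infinitely many extreme points, then there is
a sequence of distinct extreme points of `C` converging to a point `x ∈ C` such that for
every `δ > 0` there is a point `x' ∉ C` with `0 < ‖x - x'‖ < δ` whose open segment with
`x` meets `C`.  (This is the 'only if' direction of the polytope characterisation.) -/
theorem accumulation_of_extreme_points {N : ℕ} (C : Set (Fin N → ℝ))
    (hCc : IsCompact C) (hCconv : Convex ℝ C)
    (hinf : (Set.extremePoints ℝ C).Infinite) :
    ∃ (x : Fin N → ℝ) (u : ℕ → Fin N → ℝ),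
      x ∈ C ∧ Function.Injective u ∧
      (∀ n, u n ∈ Set.extremePoints ℝ C) ∧
      Tendsto u atTop (𝓝 x) ∧
      ∀ δ : ℝ, 0 < δ → ∃ x' : Fin N → ℝ, x' ∉ C ∧ 0 < ‖x - x'‖ ∧ ‖x - x'‖ < δ ∧
        (openSegment ℝ x x' ∩ C).Nonempty :=
  accumulation_of_extreme_points_general C hCc hinf
end
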